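/- arXiv:1710.09075 — 6 statements merged into one kernel-verified Lean document; each statement's English description precedes it below -/
import Mathlib

section
/- Let φ be a convex function on ℝ with φ - φ₀ ∈ L^∞(ℝ), where φ₀(x) = log(1+e^x). Then the Legendre transform u = φ* is a bounded convex function on [0,1] (finite on [0,1] and equal to +∞ outside), and the map φ ↦ φ* is an isometry for the L^∞ norms: ‖φ₁* - φ₂*‖_{L^∞[0,1]} = ‖φ₁ - φ₂‖_{L^∞(ℝ)} for any two such functions φ₁, φ₂. -/
open Set

-- xy ≤ log(1+e^x) for y ∈ [0,1]
private lemma aux_xy_le {x y : ℝ} (hy : y ∈ Icc (0:ℝ) 1) :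
    x * y ≤ Real.log (1 + Real.exp x) := by
  have h1 : Real.exp (x * y) ≤ 1 + Real.exp x := by
    rcases le_or_gt 0 x with hx | hx
    · have : x * y ≤ x := by nlinarith [hy.1, hy.2]
      have := Real.exp_le_exp.2 this
      linarith [Real.exp_pos x]
    · have : x * y ≤ 0 := by nlinarith [hy.1, hy.2]
      have h2 : Real.exp (x * y) ≤ Real.exp 0 := Real.exp_le_exp.2 this
      rw [Real.exp_zero] at h2
      linarith [Real.exp_pos x]
  calc x * y = Real.log (Real.exp (x * y)) := (Real.log_exp _).symm
    _ ≤ Real.log (1 + Real.exp x) := Real.log_le_log (Real.exp_pos _) h1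

private lemma aux_phi0_ub_pos {x : ℝ} (hx : 0 ≤ x) :
    Real.log (1 + Real.exp x) ≤ x + Real.log 2 := by
  have h1 : (1:ℝ) + Real.exp x ≤ 2 * Real.exp x := by
    have := Real.one_le_exp hx
    linarith
  calc Real.log (1 + Real.exp x) ≤ Real.log (2 * Real.exp x) :=
        Real.log_le_log (by positivity) h1
    _ = Real.log 2 + x := by rw [Real.log_mul (by norm_num) (Real.exp_ne_zero x), Real.log_exp]
    _ = x + Real.log 2 := by ring

private lemma aux_phi0_ub_neg {x : ℝ} (hx : x ≤ 0) :
    Real.log (1 + Real.exp x) ≤ Real.log 2 := by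
  have h1 : (1:ℝ) + Real.exp x ≤ 2 := by
    have := Real.exp_le_one_iff.2 hx
    linarith
  exact Real.log_le_log (by positivity) h1

private lemma aux_le_C {φ : ℝ → ℝ} {C : ℝ}
    (hb : ∀ x, |φ x - Real.log (1 + Real.exp x)| ≤ C)
    {y : ℝ} (hy : y ∈ Icc (0:ℝ) 1) (x : ℝ) : x * y - φ x ≤ C := by
  have h1 := (abs_le.1 (hb x)).1
  have h2 := aux_xy_le (x := x) hy
  linarith

private lemma aux_not_bdd {φ : ℝ → ℝ} {C : ℝ}
    (hb : ∀ x, |φ x - Real.log (1 + Real.exp x)| ≤ C)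
    {y : ℝ} (hy : y ∉ Icc (0:ℝ) 1) :
    ¬ BddAbove (Set.range fun x => x * y - φ x) := by
  rintro ⟨M, hM⟩
  rw [mem_upperBounds] at hM
  simp only [mem_Icc, not_and_or, not_le] at hy
  rcases hy with hy | hy
  · -- y < 0 : take x very negative
    set t : ℝ := min 0 ((M + Real.log 2 + C + 1) / y) with ht
    have ht0 : t ≤ 0 := min_le_left _ _
    have hty : M + Real.log 2 + C + 1 ≤ t * y := by
      have h1 : t ≤ (M + Real.log 2 + C + 1) / y := min_le_right _ _
      calc M + Real.log 2 + C + 1 = ((M + Real.log 2 + C + 1) / y) * y := by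
            rw [div_mul_cancel₀ _ (ne_of_lt hy)]
        _ ≤ t * y := by nlinarith
    have hφ : φ t ≤ Real.log 2 + C := by
      have h1 := (abs_le.1 (hb t)).2
      have h2 := aux_phi0_ub_neg ht0
      linarith
    have := hM _ (Set.mem_range_self t)
    linarith
  · -- y > 1 : take x very positive
    set t : ℝ := max 0 ((M + Real.log 2 + C + 1) / (y - 1)) with ht
    have ht0 : 0 ≤ t := le_max_left _ _
    have hty : M + Real.log 2 + C + 1 ≤ t * (y - 1) := by
      have h1 : (M + Real.log 2 + C + 1) / (y - 1) ≤ t := le_max_right _ _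
      calc M + Real.log 2 + C + 1 = ((M + Real.log 2 + C + 1) / (y - 1)) * (y - 1) := by
            rw [div_mul_cancel₀ _ (by linarith : y - 1 ≠ 0)]
        _ ≤ t * (y - 1) := by nlinarith
    have hφ : φ t ≤ t + Real.log 2 + C := by
      have h1 := (abs_le.1 (hb t)).2
      have h2 := aux_phi0_ub_pos ht0
      linarith
    have := hM _ (Set.mem_range_self t)
    nlinarith

private lemma aux_subgrad {φ : ℝ → ℝ} (h : ConvexOn ℝ Set.univ φ) {C : ℝ}
    (hb : ∀ x, |φ x - Real.log (1 + Real.exp x)| ≤ C) (x₀ : ℝ) :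
    ∃ y₀ ∈ Icc (0:ℝ) 1, ∀ x, x * y₀ - φ x ≤ x₀ * y₀ - φ x₀ := by
  set S := (fun z => (φ x₀ - φ z) / (x₀ - z)) '' Set.Iio x₀ with hS
  have hne : S.Nonempty := ⟨_, ⟨x₀ - 1, by simp, rfl⟩⟩
  have hub : ∀ w, x₀ < w → ∀ v ∈ S, v ≤ (φ w - φ x₀) / (w - x₀) := by
    rintro w hw v ⟨z, hz, rfl⟩
    exact h.slope_mono_adjacent trivial trivial hz hw
  have hbdd : BddAbove S := ⟨_, hub (x₀ + 1) (by linarith)⟩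
  set y₀ := sSup S with hy₀
  have key : ∀ x, x * y₀ - φ x ≤ x₀ * y₀ - φ x₀ := by
    intro x
    rcases lt_trichotomy x x₀ with hx | hx | hx
    · have h1 : (φ x₀ - φ x) / (x₀ - x) ≤ y₀ := le_csSup hbdd ⟨x, hx, rfl⟩
      have hpos : 0 < x₀ - x := by linarith
      rw [div_le_iff₀ hpos] at h1
      nlinarith
    · simp [hx]
    · have h1 : y₀ ≤ (φ x - φ x₀) / (x - x₀) := csSup_le hne (hub x hx)
      have hpos : 0 < x - x₀ := by linarith
      rw [le_div_iff₀ hpos] at h1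
      nlinarith
  refine ⟨y₀, ?_, key⟩
  by_contra hy
  exact aux_not_bdd hb hy ⟨x₀ * y₀ - φ x₀, by rintro v ⟨x, rfl⟩; exact key x⟩

/-- If `φ` is convex on `ℝ` with `φ - φ₀` bounded, where `φ₀(x) = log(1+eˣ)`, then the
Legendre transform `φ*` is finite (and bounded, convex) on `[0,1]`, the defining supremum is
`+∞` (i.e. not bounded above) outside `[0,1]`, and `φ ↦ φ*` is an isometry for sup norms. -/
theorem legendre_bounded_convex_isometry
    (φ₀ : ℝ → ℝ) (hφ₀ : ∀ x, φ₀ x = Real.log (1 + Real.exp x))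
    (φ₁ φ₂ : ℝ → ℝ)
    (h₁ : ConvexOn ℝ Set.univ φ₁) (h₂ : ConvexOn ℝ Set.univ φ₂)
    (hb₁ : ∃ C, ∀ x, |φ₁ x - φ₀ x| ≤ C) (hb₂ : ∃ C, ∀ x, |φ₂ x - φ₀ x| ≤ C) :
    (∀ y ∈ Set.Icc (0:ℝ) 1, BddAbove (Set.range fun x => x * y - φ₁ x)) ∧
    (∀ y ∉ Set.Icc (0:ℝ) 1, ¬ BddAbove (Set.range fun x => x * y - φ₁ x)) ∧
    ConvexOn ℝ (Set.Icc (0:ℝ) 1) (fun y => ⨆ x : ℝ, x * y - φ₁ x) ∧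
    (∃ M, ∀ y ∈ Set.Icc (0:ℝ) 1, |⨆ x : ℝ, x * y - φ₁ x| ≤ M) ∧
    (⨆ y : Set.Icc (0:ℝ) 1,
        |(⨆ x : ℝ, x * (y:ℝ) - φ₁ x) - ⨆ x : ℝ, x * (y:ℝ) - φ₂ x|)
      = ⨆ x : ℝ, |φ₁ x - φ₂ x| := by
  obtain ⟨C₁, hC₁⟩ := hb₁
  obtain ⟨C₂, hC₂⟩ := hb₂
  simp only [hφ₀] at hC₁ hC₂
  -- boundedness of ranges
  have bdd₁ : ∀ y ∈ Set.Icc (0:ℝ) 1, BddAbove (Set.range fun x => x * y - φ₁ x) :=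
    fun y hy => ⟨C₁, by rintro v ⟨x, rfl⟩; exact aux_le_C hC₁ hy x⟩
  have bdd₂ : ∀ y ∈ Set.Icc (0:ℝ) 1, BddAbove (Set.range fun x => x * y - φ₂ x) :=
    fun y hy => ⟨C₂, by rintro v ⟨x, rfl⟩; exact aux_le_C hC₂ hy x⟩
  set f₁ : ℝ → ℝ := fun y => ⨆ x : ℝ, x * y - φ₁ x with hf₁
  set f₂ : ℝ → ℝ := fun y => ⨆ x : ℝ, x * y - φ₂ x with hf₂
  refine ⟨bdd₁, fun y hy => aux_not_bdd hC₁ hy, ?_, ?_, ?_⟩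
  · -- convexity
    refine ⟨convex_Icc 0 1, fun y₁ hy₁ y₂ hy₂ a b ha hb hab => ?_⟩
    refine ciSup_le fun x => ?_
    have e1 : x * (a • y₁ + b • y₂) - φ₁ x
        = a * (x * y₁ - φ₁ x) + b * (x * y₂ - φ₁ x) := by
      simp only [smul_eq_mul]; linear_combination (φ₁ x) * hab
    rw [e1]
    have l1 : x * y₁ - φ₁ x ≤ f₁ y₁ := le_ciSup (bdd₁ y₁ hy₁) x
    have l2 : x * y₂ - φ₁ x ≤ f₁ y₂ := le_ciSup (bdd₁ y₂ hy₂) x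
    have := add_le_add (mul_le_mul_of_nonneg_left l1 ha) (mul_le_mul_of_nonneg_left l2 hb)
    simpa [smul_eq_mul] using this
  · -- boundedness of f₁ on [0,1]
    refine ⟨C₁ + Real.log 2, fun y hy => abs_le.2 ⟨?_, ?_⟩⟩
    · have h0 : 0 * y - φ₁ 0 ≤ f₁ y := le_ciSup (bdd₁ y hy) 0
      have h1 := (abs_le.1 (hC₁ 0)).2
      have h2 : Real.log (1 + Real.exp 0) = Real.log 2 := by norm_num
      rw [h2] at h1
      have : -(C₁ + Real.log 2) ≤ 0 * y - φ₁ 0 := by linarith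
      linarith
    · have h1 : f₁ y ≤ C₁ := ciSup_le fun x => aux_le_C hC₁ hy x
      have h2 : (0:ℝ) ≤ Real.log 2 := Real.log_nonneg (by norm_num)
      linarith
  · -- isometry
    haveI : Nonempty (Set.Icc (0:ℝ) 1) := ⟨⟨0, le_refl 0, zero_le_one⟩⟩
    set D : ℝ := ⨆ x : ℝ, |φ₁ x - φ₂ x| with hD
    have hDbdd : BddAbove (Set.range fun x => |φ₁ x - φ₂ x|) := by
      refine ⟨C₁ + C₂, ?_⟩
      rintro v ⟨x, rfl⟩
      calc |φ₁ x - φ₂ x|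
          ≤ |φ₁ x - Real.log (1 + Real.exp x)| + |φ₂ x - Real.log (1 + Real.exp x)| := by
            have h := abs_sub (φ₁ x - Real.log (1 + Real.exp x))
              (φ₂ x - Real.log (1 + Real.exp x))
            have e : φ₁ x - Real.log (1 + Real.exp x)
                - (φ₂ x - Real.log (1 + Real.exp x)) = φ₁ x - φ₂ x := by ring
            rwa [e] at h
        _ ≤ C₁ + C₂ := add_le_add (hC₁ x) (hC₂ x)
    have hxD : ∀ x, |φ₁ x - φ₂ x| ≤ D := fun x => le_ciSup hDbdd x
    -- pointwise bound |f₁ y - f₂ y| ≤ D on [0,1]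
    have step1 : ∀ y ∈ Set.Icc (0:ℝ) 1, |f₁ y - f₂ y| ≤ D := by
      intro y hy
      have l12 : f₁ y ≤ f₂ y + D := by
        refine ciSup_le fun x => ?_
        have := le_ciSup (bdd₂ y hy) x
        have hx := (abs_le.1 (hxD x)).1
        calc x * y - φ₁ x ≤ (x * y - φ₂ x) + D := by linarith
          _ ≤ f₂ y + D := by linarith [le_ciSup (bdd₂ y hy) x]
      have l21 : f₂ y ≤ f₁ y + D := by
        refine ciSup_le fun x => ?_
        have hx := (abs_le.1 (hxD x)).2
        calc x * y - φ₂ x ≤ (x * y - φ₁ x) + D := by linarith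
          _ ≤ f₁ y + D := by linarith [le_ciSup (bdd₁ y hy) x]
      exact abs_le.2 ⟨by linarith, by linarith⟩
    have hLbdd : BddAbove (Set.range fun y : Set.Icc (0:ℝ) 1 => |f₁ y - f₂ y|) :=
      ⟨D, by rintro v ⟨y, rfl⟩; exact step1 y y.2⟩
    set L : ℝ := ⨆ y : Set.Icc (0:ℝ) 1, |f₁ y - f₂ y| with hL
    have hLD : L ≤ D := ciSup_le fun y => step1 y y.2
    have hDL : D ≤ L := by
      refine ciSup_le fun x₀ => ?_
      refine abs_le.2 ⟨?_, ?_⟩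
      · -- φ₂ x₀ - φ₁ x₀ ≤ L, via subgradient of φ₂
        obtain ⟨y₀, hy₀, hsub⟩ := aux_subgrad h₂ hC₂ x₀
        have e2 : f₂ y₀ ≤ x₀ * y₀ - φ₂ x₀ := ciSup_le hsub
        have e1 : x₀ * y₀ - φ₁ x₀ ≤ f₁ y₀ := le_ciSup (bdd₁ y₀ hy₀) x₀
        have h3 : φ₂ x₀ - φ₁ x₀ ≤ f₁ y₀ - f₂ y₀ := by linarith
        have h4 : f₁ y₀ - f₂ y₀ ≤ |f₁ y₀ - f₂ y₀| := le_abs_self _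
        have h5 : |f₁ y₀ - f₂ y₀| ≤ L := le_ciSup hLbdd ⟨y₀, hy₀⟩
        linarith
      · -- φ₁ x₀ - φ₂ x₀ ≤ L, via subgradient of φ₁
        obtain ⟨y₀, hy₀, hsub⟩ := aux_subgrad h₁ hC₁ x₀
        have e1 : f₁ y₀ ≤ x₀ * y₀ - φ₁ x₀ := ciSup_le hsub
        have e2 : x₀ * y₀ - φ₂ x₀ ≤ f₂ y₀ := le_ciSup (bdd₂ y₀ hy₀) x₀
        have h3 : φ₁ x₀ - φ₂ x₀ ≤ f₂ y₀ - f₁ y₀ := by linarith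
        have h4 : f₂ y₀ - f₁ y₀ ≤ |f₁ y₀ - f₂ y₀| := neg_le_abs _ |>.trans' (by linarith [neg_abs_le (f₁ y₀ - f₂ y₀)])
        have h5 : |f₁ y₀ - f₂ y₀| ≤ L := le_ciSup hLbdd ⟨y₀, hy₀⟩
        linarith
    exact le_antisymm hLD hDL
end

section
/- Let u₀(y) = y log y + (1-y) log(1-y) on [0,1] and v(y) = max(0, y - 1/2). For t ∈ (0,1], define φ_t = (u₀ + t·v)* (Legendre transform). Then φ_t(x) = φ₀(x) for x ≤ 0, φ_t(x) = φ₀(0) + x/2 for x ∈ [0,t], and φ_t(x) = φ₀(x - t) + t/2 for x ≥ t, where φ₀(x) = log(1+e^x). -/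
/-!
With `σ` the logistic sigmoid, `x y - u₀(y) = log(1 + eˣ) - KL(y ‖ σ(x))`, so `u₀* = φ₀` with the
supremum attained at `y = σ(x)`. For `t ≥ 0` the kink `t v(y) = max(0, t (y - 1/2))` dominates both
`0` and `t (y - 1/2)`, and `x y - t v(y) ≤ x/2` when `0 ≤ x ≤ t`. Hence the objective
`x y - u₀(y) - t v(y)` is bounded by `φ₀(x)`, by `φ₀(x - t) + t/2` and by `φ₀(0) + x/2`; these bounds
are attained at `σ(x) ≤ 1/2` for `x ≤ 0`, at `σ(x - t) ≥ 1/2` for `x ≥ t`, and at `σ(0) = 1/2`.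
-/

/-- `u₀(y) = y log y + (1-y) log(1-y)` (with `0 log 0 = 0`, which is Mathlib's convention
for `Real.log`). -/
noncomputable def entropyU (y : ℝ) : ℝ := y * Real.log y + (1 - y) * Real.log (1 - y)

/-- `v(y) = max(0, y - 1/2)`. -/
noncomputable def kinkV (y : ℝ) : ℝ := max 0 (y - 1/2)

/-- The Legendre transform `φ_t = (u₀ + t v)*` over the interval `[0,1]`. -/
noncomputable def geodesicPhi (t x : ℝ) : ℝ :=
  ⨆ y : Set.Icc (0:ℝ) 1, (x * (y : ℝ) - (entropyU y + t * kinkV y))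

open Real Set

lemma Real.log_sigmoid (x : ℝ) : log (sigmoid x) = x - log (1 + exp x) := by
  have h : 1 + exp (-x) = exp (-x) * (1 + exp x) := by
    rw [mul_add, mul_one, ← exp_add, neg_add_cancel, exp_zero, add_comm]
  rw [sigmoid_def, log_inv, h, log_mul (exp_pos _).ne' (by positivity), log_exp]
  ring

lemma Real.log_one_sub_sigmoid (x : ℝ) : log (1 - sigmoid x) = -log (1 + exp x) := by
  rw [← sigmoid_neg, sigmoid_def, neg_neg, log_inv]

lemma Real.sigmoid_mem_Icc (x : ℝ) : sigmoid x ∈ Icc (0 : ℝ) 1 :=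
  ⟨sigmoid_nonneg x, sigmoid_le_one x⟩

lemma Real.sigmoid_le_half_iff {x : ℝ} : sigmoid x ≤ 1 / 2 ↔ x ≤ 0 := by
  rw [one_div, ← sigmoid_zero, sigmoid_le_iff]

lemma Real.half_le_sigmoid_iff {x : ℝ} : 1 / 2 ≤ sigmoid x ↔ 0 ≤ x := by
  rw [one_div, ← sigmoid_zero, sigmoid_le_iff]

/-- Also valid at `y = 0`, where `log 0 = 0`. -/
lemma mul_log_sub_log_le {p y : ℝ} (hp : 0 < p) (hy : 0 ≤ y) : y * (log p - log y) ≤ p - y := by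
  rcases hy.eq_or_lt with rfl | hy
  · simpa using hp.le
  have h := log_le_sub_one_of_pos (div_pos hp hy)
  rw [log_div hp.ne' hy.ne'] at h
  calc y * (log p - log y) ≤ y * (p / y - 1) := by gcongr
    _ = p - y := by field_simp

lemma mul_sub_entropyU_eq (x y : ℝ) :
    x * y - entropyU y = log (1 + exp x) + y * (log (sigmoid x) - log y)
      + (1 - y) * (log (1 - sigmoid x) - log (1 - y)) := by
  rw [log_sigmoid, log_one_sub_sigmoid, entropyU]
  ring

lemma mul_sub_entropyU_le (x : ℝ) {y : ℝ} (hy : y ∈ Icc (0 : ℝ) 1) :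
    x * y - entropyU y ≤ log (1 + exp x) := by
  have h₁ := mul_log_sub_log_le (sigmoid_pos x) hy.1
  have h₂ := mul_log_sub_log_le (sub_pos.2 (sigmoid_lt_one x)) (sub_nonneg.2 hy.2)
  rw [mul_sub_entropyU_eq]
  linarith

lemma mul_sigmoid_sub_entropyU_sigmoid (x : ℝ) :
    x * sigmoid x - entropyU (sigmoid x) = log (1 + exp x) := by
  simp [mul_sub_entropyU_eq]

lemma kinkV_nonneg (y : ℝ) : 0 ≤ kinkV y := le_max_left _ _

lemma sub_half_le_kinkV (y : ℝ) : y - 1 / 2 ≤ kinkV y := le_max_right _ _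

lemma kinkV_of_le_half {y : ℝ} (hy : y ≤ 1 / 2) : kinkV y = 0 := max_eq_left (by linarith)

lemma kinkV_of_half_le {y : ℝ} (hy : 1 / 2 ≤ y) : kinkV y = y - 1 / 2 :=
  max_eq_right (by linarith)

lemma mul_sub_mul_kinkV_le {t x : ℝ} (hx : x ∈ Icc 0 t) (y : ℝ) : x * y - t * kinkV y ≤ x / 2 := by
  rcases le_total y (1 / 2) with hy | hy
  · rw [kinkV_of_le_half hy]
    nlinarith [hx.1]
  · rw [kinkV_of_half_le hy]
    nlinarith [hx.2]

lemma geodesicPhi_eq_of_forall_le {t x y₀ M : ℝ} (hy₀ : y₀ ∈ Icc (0 : ℝ) 1)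
    (h₀ : x * y₀ - (entropyU y₀ + t * kinkV y₀) = M)
    (hle : ∀ y ∈ Icc (0 : ℝ) 1, x * y - (entropyU y + t * kinkV y) ≤ M) :
    geodesicPhi t x = M := by
  subst h₀
  exact IsMaxOn.iSup_eq (f := fun y => x * y - (entropyU y + t * kinkV y)) hy₀ hle

lemma geodesicPhi_of_nonpos {t x : ℝ} (ht : 0 ≤ t) (hx : x ≤ 0) :
    geodesicPhi t x = log (1 + exp x) := by
  refine geodesicPhi_eq_of_forall_le (sigmoid_mem_Icc x) ?_ fun y hy => ?_
  · rw [kinkV_of_le_half (sigmoid_le_half_iff.2 hx), mul_zero, add_zero]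
    exact mul_sigmoid_sub_entropyU_sigmoid x
  · nlinarith [mul_sub_entropyU_le x hy, kinkV_nonneg y]

lemma geodesicPhi_of_mem_Icc {t x : ℝ} (hx : x ∈ Icc 0 t) :
    geodesicPhi t x = log (1 + exp 0) + x / 2 := by
  have hhalf := mul_sigmoid_sub_entropyU_sigmoid 0
  rw [sigmoid_zero, zero_mul, zero_sub] at hhalf
  refine geodesicPhi_eq_of_forall_le (sigmoid_mem_Icc 0) ?_ fun y hy => ?_
  · rw [sigmoid_zero, kinkV_of_le_half (by norm_num)]
    linarith
  · linarith [mul_sub_entropyU_le 0 hy, mul_sub_mul_kinkV_le hx y]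

lemma geodesicPhi_of_le {t x : ℝ} (ht : 0 ≤ t) (hx : t ≤ x) :
    geodesicPhi t x = log (1 + exp (x - t)) + t / 2 := by
  have hσ := mul_sigmoid_sub_entropyU_sigmoid (x - t)
  refine geodesicPhi_eq_of_forall_le (sigmoid_mem_Icc (x - t)) ?_ fun y hy => ?_
  · rw [kinkV_of_half_le (half_le_sigmoid_iff.2 (sub_nonneg.2 hx))]
    linarith
  · nlinarith [mul_sub_entropyU_le (x - t) hy, sub_half_le_kinkV y]

/-- Explicit description of the geodesic `φ_t = (u₀ + t v)*` for `t ∈ (0,1]`: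
it equals `φ₀(x) = log(1+eˣ)` for `x ≤ 0`, is affine with slope `1/2` on `[0,t]`,
and equals `φ₀(x-t) + t/2` for `x ≥ t`. -/
theorem geodesicPhi_explicit (t : ℝ) (ht : t ∈ Set.Ioc (0:ℝ) 1) :
    (∀ x ≤ (0:ℝ), geodesicPhi t x = Real.log (1 + Real.exp x)) ∧
    (∀ x ∈ Set.Icc (0:ℝ) t, geodesicPhi t x = Real.log (1 + Real.exp 0) + x / 2) ∧
    (∀ x ≥ t, geodesicPhi t x = Real.log (1 + Real.exp (x - t)) + t / 2) :=
  ⟨fun _ hx => geodesicPhi_of_nonpos ht.1.le hx, fun _ hx => geodesicPhi_of_mem_Icc hx,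
    fun _ hx => geodesicPhi_of_le ht.1.le hx⟩
end

section
/- For t ∈ (0,1], the function φ_t defined piecewise by φ_t(x) = log(1+e^x) for x ≤ 0, φ_t(x) = log 2 + x/2 for x ∈ [0,t], and φ_t(x) = log(1+e^{x-t}) + t/2 for x ≥ t, is convex on ℝ and C^{1,1}: its derivative exists everywhere and is Lipschitz continuous with Lipschitz constant at most 1/4. -/
/-!
On each of the three pieces `φ'` is a translate of the logistic function `σ = (log (1 + exp ·))'`
or the constant `σ 0 = 1/2`, and these agree at the junctions `0` and `t`, so
`φ' = σ ∘ deadZone t`, where `deadZone t` is `x` on `(-∞, 0]`, `0` on `[0, t]` and `x - t` on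
`[t, ∞)`. Both factors are monotone, so `φ` is convex; `deadZone t` is `1`-Lipschitz and
`σ' = σ (1 - σ) ≤ 1/4`, so `φ'` is `1/4`-Lipschitz.
-/

open scoped NNReal

open Real Set Filter Topology

theorem Real.lipschitzWith_sigmoid : LipschitzWith (1 / 4) sigmoid := by
  refine lipschitzWith_of_nnnorm_deriv_le differentiable_sigmoid fun x => ?_
  rw [(hasDerivAt_sigmoid x).deriv, ← NNReal.coe_le_coe, coe_nnnorm, Real.norm_eq_abs,
    abs_of_nonneg (mul_nonneg (sigmoid_nonneg x) (by linarith [sigmoid_le_one x]))]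
  push_cast
  nlinarith [sq_nonneg (2 * sigmoid x - 1)]

theorem Real.hasDerivAt_log_one_add_exp (x : ℝ) :
    HasDerivAt (fun y => log (1 + exp y)) (sigmoid x) x := by
  have h := ((hasDerivAt_exp x).const_add 1).log (by positivity)
  convert h using 1
  rw [sigmoid_def, exp_neg]
  field_simp
  ring

noncomputable def deadZone (t x : ℝ) : ℝ := max (min x 0) (x - t)

theorem deadZone_of_nonpos {t x : ℝ} (ht : 0 ≤ t) (hx : x ≤ 0) : deadZone t x = x := by
  rw [deadZone, min_eq_left hx, max_eq_left (by linarith)]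

theorem deadZone_of_mem_Icc {t x : ℝ} (hx : x ∈ Icc 0 t) : deadZone t x = 0 := by
  rw [deadZone, min_eq_right hx.1, max_eq_left (by linarith [hx.2])]

theorem deadZone_of_le {t x : ℝ} (hx : t ≤ x) : deadZone t x = x - t := by
  rw [deadZone, max_eq_right ((min_le_right x 0).trans (by linarith))]

theorem deadZone_monotone (t : ℝ) : Monotone (deadZone t) := fun _ _ hab =>
  max_le_max (min_le_min_right 0 hab) (sub_le_sub_right hab t)

theorem deadZone_lipschitzWith (t : ℝ) : LipschitzWith 1 (deadZone t) := by
  have h := (LipschitzWith.id.min_const 0).max (IsometryEquiv.subRight t).isometry.lipschitz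
  rwa [max_self] at h

theorem HasDerivAt.of_eventuallyEq_nhdsLE_nhdsGE {F : Type*} [NormedAddCommGroup F]
    [NormedSpace ℝ F] {f g h : ℝ → F} {a : ℝ} {d : F}
    (hg : HasDerivAt g d a) (hh : HasDerivAt h d a)
    (hfg : f =ᶠ[𝓝[≤] a] g) (hfh : f =ᶠ[𝓝[≥] a] h) : HasDerivAt f d a := by
  have hle := hg.hasDerivWithinAt.congr_of_eventuallyEq hfg
    (hfg.eq_of_nhdsWithin (mem_Iic.2 le_rfl))
  have hge := hh.hasDerivWithinAt.congr_of_eventuallyEq hfh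
    (hfh.eq_of_nhdsWithin (mem_Ici.2 le_rfl))
  simpa only [Iic_union_Ici, hasDerivWithinAt_univ] using hle.union hge

section Geodesic

variable {t : ℝ} {φ : ℝ → ℝ}
  (h1 : ∀ x ≤ (0:ℝ), φ x = log (1 + exp x))
  (h2 : ∀ x ∈ Icc (0:ℝ) t, φ x = log 2 + x / 2)
  (h3 : ∀ x ≥ t, φ x = log (1 + exp (x - t)) + t / 2)
include h1 h2 h3

theorem hasDerivAt_sigmoid_deadZone (ht : 0 < t) (x : ℝ) :
    HasDerivAt φ (sigmoid (deadZone t x)) x := by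
  have hp₁ : ∀ y, HasDerivAt (fun z => log (1 + exp z)) (sigmoid y) y :=
    hasDerivAt_log_one_add_exp
  have hp₂ : ∀ y, HasDerivAt (fun z => log 2 + z / 2) (sigmoid 0) y := fun y => by
    simpa [sigmoid_zero] using ((hasDerivAt_id y).div_const 2).const_add (log 2)
  have hp₃ : ∀ y, HasDerivAt (fun z => log (1 + exp (z - t)) + t / 2) (sigmoid (y - t)) y :=
    fun y => by
      simpa using ((hp₁ (y - t)).comp y ((hasDerivAt_id y).sub_const t)).add_const (t / 2)
  rcases lt_trichotomy x 0 with hx | rfl | hx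
  · rw [deadZone_of_nonpos ht.le hx.le]
    exact (hp₁ x).congr_of_eventuallyEq
      (eventually_of_mem (Iio_mem_nhds hx) fun y hy => h1 y hy.le)
  · rw [deadZone_of_nonpos ht.le le_rfl]
    exact (hp₁ 0).of_eventuallyEq_nhdsLE_nhdsGE (hp₂ 0) (eventually_nhdsWithin_of_forall h1)
      (eventually_of_mem (Icc_mem_nhdsGE ht) h2)
  rcases lt_trichotomy x t with hxt | rfl | hxt
  · rw [deadZone_of_mem_Icc ⟨hx.le, hxt.le⟩]
    exact (hp₂ x).congr_of_eventuallyEq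
      (eventually_of_mem (Ioo_mem_nhds hx hxt) fun y hy => h2 y (Ioo_subset_Icc_self hy))
  · rw [deadZone_of_mem_Icc ⟨hx.le, le_rfl⟩]
    exact (hp₂ x).of_eventuallyEq_nhdsLE_nhdsGE (by simpa using hp₃ x)
      (eventually_of_mem (Icc_mem_nhdsLE hx) h2) (eventually_nhdsWithin_of_forall h3)
  · rw [deadZone_of_le hxt.le]
    exact (hp₃ x).congr_of_eventuallyEq
      (eventually_of_mem (Ioi_mem_nhds hxt) fun y hy => h3 y hy.le)

end Geodesic

/-- The piecewise function `φ_t` (equal to `log(1+eˣ)` for `x ≤ 0`, affine with slope `1/2`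
on `[0,t]`, and `log(1+e^{x-t}) + t/2` for `x ≥ t`) is convex on `ℝ` and `C^{1,1}`:
differentiable everywhere with derivative Lipschitz of constant at most `1/4`. -/
theorem geodesic_is_C11 (t : ℝ) (ht : t ∈ Set.Ioc (0:ℝ) 1) (φ : ℝ → ℝ)
    (h1 : ∀ x ≤ (0:ℝ), φ x = Real.log (1 + Real.exp x))
    (h2 : ∀ x ∈ Set.Icc (0:ℝ) t, φ x = Real.log 2 + x / 2)
    (h3 : ∀ x ≥ t, φ x = Real.log (1 + Real.exp (x - t)) + t / 2) :
    ConvexOn ℝ Set.univ φ ∧ Differentiable ℝ φ ∧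
      LipschitzWith (1/4 : ℝ≥0) (deriv φ) := by
  have hφ' := hasDerivAt_sigmoid_deadZone h1 h2 h3 ht.1
  have hdiff : Differentiable ℝ φ := fun x => (hφ' x).differentiableAt
  have hderiv : deriv φ = sigmoid ∘ deadZone t := funext fun x => (hφ' x).deriv
  refine ⟨Monotone.convexOn_univ_of_deriv hdiff ?_, hdiff, ?_⟩ <;> rw [hderiv]
  · exact sigmoid_monotone.comp (deadZone_monotone t)
  · simpa using lipschitzWith_sigmoid.comp (deadZone_lipschitzWith t)
end

section
/- Let u₀ and v be convex functions on [0,1] with u₀ smooth and strictly convex on (0,1) with u₀'' ≥ 1/C > 0, and v bounded. Then the Legendre transform φ = (u₀ + v)* satisfies the second-order distributional inequality ∂²φ ≤ C·dx; in particular φ ∈ C^{1,1}(ℝ). -/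
open Set Filter Topology


lemma aux_hasDerivAt {C : ℝ} {φ : ℝ → ℝ}
    (h1 : ConvexOn ℝ Set.univ φ)
    (h2 : ConvexOn ℝ Set.univ (fun x => C / 2 * x ^ 2 - φ x)) (x : ℝ) :
    ∃ d, HasDerivAt φ d x := by
  set ψ : ℝ → ℝ := fun x => C / 2 * x ^ 2 - φ x with hψdef
  have mono : MonotoneOn (slope φ x) ({x}ᶜ) := by
    have := h1.slope_mono (Set.mem_univ x); rwa [Set.diff_eq, Set.univ_inter] at this
  have monoψ : MonotoneOn (slope ψ x) ({x}ᶜ) := by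
    have := h2.slope_mono (Set.mem_univ x); rwa [Set.diff_eq, Set.univ_inter] at this
  have hIoi : Ioi x ⊆ ({x}ᶜ : Set ℝ) := fun y hy => ne_of_gt hy
  have hIio : Iio x ⊆ ({x}ᶜ : Set ℝ) := fun y hy => ne_of_lt hy
  have hneR : (slope φ x '' Ioi x).Nonempty := ⟨_, mem_image_of_mem _ (mem_Ioi.2 (lt_add_one x))⟩
  have hneL : (slope φ x '' Iio x).Nonempty := ⟨_, mem_image_of_mem _ (mem_Iio.2 (sub_one_lt x))⟩
  have bddR : ∀ (f : ℝ → ℝ), MonotoneOn (slope f x) ({x}ᶜ) → BddBelow (slope f x '' Ioi x) := by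
    intro f mf
    refine ⟨slope f x (x - 1), ?_⟩
    rintro z ⟨y, hy, rfl⟩
    exact mf (hIio (by linarith : x - 1 < x)) (hIoi hy) (by linarith [mem_Ioi.1 hy])
  have bddL : ∀ (f : ℝ → ℝ), MonotoneOn (slope f x) ({x}ᶜ) → BddAbove (slope f x '' Iio x) := by
    intro f mf
    refine ⟨slope f x (x + 1), ?_⟩
    rintro z ⟨y, hy, rfl⟩
    exact mf (hIio hy) (hIoi (by linarith : x < x + 1)) (by linarith [mem_Iio.1 hy])
  set A := sInf (slope φ x '' Ioi x) with hA
  set B := sSup (slope φ x '' Iio x) with hB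
  have hBA : B ≤ A := by
    apply csSup_le hneL
    rintro b ⟨yb, hyb, rfl⟩
    apply le_csInf hneR
    rintro a ⟨ya, hya, rfl⟩
    exact mono (hIio hyb) (hIoi hya) (le_of_lt ((mem_Iio.1 hyb).trans (mem_Ioi.1 hya)))
  have tendR : Tendsto (slope φ x) (𝓝[>] x) (𝓝 A) :=
    MonotoneOn.tendsto_nhdsGT (mono.mono hIoi) (bddR φ mono)
  have tendL : Tendsto (slope φ x) (𝓝[<] x) (𝓝 B) :=
    MonotoneOn.tendsto_nhdsLT (mono.mono hIio) (bddL φ mono)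
  have slope_rel : ∀ y : ℝ, y ≠ x → slope ψ x y = C / 2 * (y + x) - slope φ x y := by
    intro y hy
    have hyx : y - x ≠ 0 := sub_ne_zero.2 hy
    simp only [slope_def_field, hψdef]
    field_simp
    ring
  have tendRψ : Tendsto (slope ψ x) (𝓝[>] x) (𝓝 (C * x - A)) := by
    have base : Tendsto (fun y => C / 2 * (y + x) - slope φ x y) (𝓝[>] x) (𝓝 (C * x - A)) := by
      have h1' : Tendsto (fun y : ℝ => C / 2 * (y + x)) (𝓝[>] x) (𝓝 (C * x)) := by
        have : Tendsto (fun y : ℝ => C / 2 * (y + x)) (𝓝 x) (𝓝 (C / 2 * (x + x))) :=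
          (continuous_const.mul (continuous_id.add continuous_const)).tendsto x
        have heq : C / 2 * (x + x) = C * x := by ring
        exact (heq ▸ this).mono_left nhdsWithin_le_nhds
      exact h1'.sub tendR
    refine base.congr' ?_
    filter_upwards [self_mem_nhdsWithin] with y hy
    exact (slope_rel y (ne_of_gt hy)).symm
  have tendLψ : Tendsto (slope ψ x) (𝓝[<] x) (𝓝 (C * x - B)) := by
    have base : Tendsto (fun y => C / 2 * (y + x) - slope φ x y) (𝓝[<] x) (𝓝 (C * x - B)) := by
      have h1' : Tendsto (fun y : ℝ => C / 2 * (y + x)) (𝓝[<] x) (𝓝 (C * x)) := by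
        have : Tendsto (fun y : ℝ => C / 2 * (y + x)) (𝓝 x) (𝓝 (C / 2 * (x + x))) :=
          (continuous_const.mul (continuous_id.add continuous_const)).tendsto x
        have heq : C / 2 * (x + x) = C * x := by ring
        exact (heq ▸ this).mono_left nhdsWithin_le_nhds
      exact h1'.sub tendL
    refine base.congr' ?_
    filter_upwards [self_mem_nhdsWithin] with y hy
    exact (slope_rel y (ne_of_lt hy)).symm
  -- ψ's one-sided limits and monotonicity
  have tendRψ' : Tendsto (slope ψ x) (𝓝[>] x) (𝓝 (sInf (slope ψ x '' Ioi x))) :=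
    MonotoneOn.tendsto_nhdsGT (monoψ.mono hIoi) (bddR ψ monoψ)
  have tendLψ' : Tendsto (slope ψ x) (𝓝[<] x) (𝓝 (sSup (slope ψ x '' Iio x))) :=
    MonotoneOn.tendsto_nhdsLT (monoψ.mono hIio) (bddL ψ monoψ)
  have hBAψ : sSup (slope ψ x '' Iio x) ≤ sInf (slope ψ x '' Ioi x) := by
    apply csSup_le ⟨_, mem_image_of_mem _ (mem_Iio.2 (sub_one_lt x))⟩
    rintro b ⟨yb, hyb, rfl⟩
    apply le_csInf ⟨_, mem_image_of_mem _ (mem_Ioi.2 (lt_add_one x))⟩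
    rintro a ⟨ya, hya, rfl⟩
    exact monoψ (hIio hyb) (hIoi hya) (le_of_lt ((mem_Iio.1 hyb).trans (mem_Ioi.1 hya)))
  have eqR : sInf (slope ψ x '' Ioi x) = C * x - A := tendsto_nhds_unique tendRψ' tendRψ
  have eqL : sSup (slope ψ x '' Iio x) = C * x - B := tendsto_nhds_unique tendLψ' tendLψ
  have hAB : A = B := le_antisymm (by rw [eqL, eqR] at hBAψ; linarith) hBA
  refine ⟨A, hasDerivAt_iff_tendsto_slope.2 ?_⟩
  rw [← nhdsLT_sup_nhdsGT, tendsto_sup]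
  exact ⟨hAB ▸ tendL, tendR⟩

lemma aux_c11 {C : ℝ} (hC : 0 ≤ C) {φ : ℝ → ℝ}
    (h1 : ConvexOn ℝ Set.univ φ)
    (h2 : ConvexOn ℝ Set.univ (fun x => C / 2 * x ^ 2 - φ x)) :
    Differentiable ℝ φ ∧ LipschitzWith C.toNNReal (deriv φ) := by
  have hdiff : Differentiable ℝ φ := fun x => (aux_hasDerivAt h1 h2 x).choose_spec.differentiableAt
  have monoφ : Monotone (deriv φ) := by
    have := h1.monotoneOn_deriv (fun x _ => hdiff x)
    rwa [monotoneOn_univ] at this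
  have hdψ : ∀ x, deriv (fun x => C / 2 * x ^ 2 - φ x) x = C * x - deriv φ x := by
    intro x
    have h2' := (hasDerivAt_pow 2 x).const_mul (C / 2)
    have h3' : HasDerivAt (fun x : ℝ => C / 2 * x ^ 2) (C * x) x := by
      exact h2'.congr_deriv (by norm_num; ring)
    exact (h3'.sub (hdiff x).hasDerivAt).deriv
  have monoψ : Monotone (fun x => C * x - deriv φ x) := by
    have hdψdiff : Differentiable ℝ (fun x => C / 2 * x ^ 2 - φ x) :=
      (Differentiable.sub (by fun_prop) hdiff)
    have hm := h2.monotoneOn_deriv (fun x _ => hdψdiff x)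
    rw [monotoneOn_univ] at hm
    intro a b hab
    have := hm hab
    rwa [hdψ a, hdψ b] at this
  refine ⟨hdiff, ?_⟩
  refine LipschitzWith.of_dist_le_mul fun a b => ?_
  rw [Real.dist_eq, Real.dist_eq, Real.coe_toNNReal _ hC]
  rcases le_total a b with h | h
  · have ha1 := monoφ h
    have ha2 : C * a - deriv φ a ≤ C * b - deriv φ b := monoψ h
    rw [abs_of_nonpos (by linarith : a - b ≤ 0), abs_of_nonpos (by linarith)]
    linarith
  · have ha1 := monoφ h
    have ha2 : C * b - deriv φ b ≤ C * a - deriv φ a := monoψ h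
    rw [abs_of_nonneg (by linarith : 0 ≤ a - b), abs_of_nonneg (by linarith)]
    linarith


lemma aux_strong {C : ℝ} (hC : 0 < C) {u₀ : ℝ → ℝ}
    (hsm : ContDiffOn ℝ (⊤ : ℕ∞) u₀ (Set.Ioo (0:ℝ) 1))
    (hstrict : ∀ y ∈ Set.Ioo (0:ℝ) 1, 1 / C ≤ deriv (deriv u₀) y) :
    ConvexOn ℝ (Set.Ioo (0:ℝ) 1) (fun y => u₀ y - y ^ 2 / (2 * C)) := by
  have hopen : IsOpen (Set.Ioo (0:ℝ) 1) := isOpen_Ioo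
  have hd1 : ∀ y ∈ Set.Ioo (0:ℝ) 1, DifferentiableAt ℝ u₀ y := fun y hy =>
    (hsm.contDiffAt (hopen.mem_nhds hy)).differentiableAt (by simp)
  have hderiv_cd : ContDiffOn ℝ (⊤ : ℕ∞) (deriv u₀) (Set.Ioo (0:ℝ) 1) :=
    hsm.deriv_of_isOpen hopen (by simp)
  have hd2 : ∀ y ∈ Set.Ioo (0:ℝ) 1, DifferentiableAt ℝ (deriv u₀) y := fun y hy =>
    (hderiv_cd.contDiffAt (hopen.mem_nhds hy)).differentiableAt (by simp)
  set f : ℝ → ℝ := fun y => u₀ y - y ^ 2 / (2 * C) with hf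
  have hq : ∀ z : ℝ, HasDerivAt (fun y : ℝ => y ^ 2 / (2 * C)) (z / C) z := by
    intro z
    have h := (hasDerivAt_pow 2 z).div_const (2 * C)
    refine h.congr_deriv ?_
    field_simp
    ring
  have heq : Set.EqOn (deriv f) (fun z => deriv u₀ z - z / C) (Set.Ioo (0:ℝ) 1) :=
    fun z hz => ((hd1 z hz).hasDerivAt.sub (hq z)).deriv
  apply convexOn_of_deriv2_nonneg (convex_Ioo 0 1)
  · exact (hsm.continuousOn).sub (Continuous.continuousOn (by fun_prop))
  · rw [hopen.interior_eq]
    intro y hy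
    exact ((hd1 y hy).sub
      (by fun_prop : DifferentiableAt ℝ (fun y : ℝ => y ^ 2 / (2 * C)) y)).differentiableWithinAt
  · rw [hopen.interior_eq]
    intro y hy
    have hev : deriv f =ᶠ[𝓝 y] fun z => deriv u₀ z - z / C :=
      Filter.eventuallyEq_of_mem (hopen.mem_nhds hy) heq
    have hnice : DifferentiableAt ℝ (fun z => deriv u₀ z - z / C) y :=
      (hd2 y hy).sub (by fun_prop)
    exact (hev.differentiableAt_iff.mpr hnice).differentiableWithinAt
  · rw [hopen.interior_eq]
    intro y hy
    have h2 : deriv^[2] f y = deriv (deriv f) y := by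
      simp [Function.iterate_succ_apply']
    rw [h2]
    have hev : deriv f =ᶠ[𝓝 y] fun z => deriv u₀ z - z / C :=
      Filter.eventuallyEq_of_mem (hopen.mem_nhds hy) heq
    rw [hev.deriv_eq]
    have hdd : HasDerivAt (fun z => deriv u₀ z - z / C) (deriv (deriv u₀) y - 1 / C) y :=
      (hd2 y hy).hasDerivAt.sub ((hasDerivAt_id y).div_const C)
    rw [hdd.deriv]
    linarith [hstrict y hy]


lemma aux_alg (C a x₁ x₂ y₁ y₂ : ℝ) (hC : 0 < C) (ha : 0 ≤ a) (hb : 0 ≤ 1 - a) :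
    a*x₁*y₁ + (1-a)*x₂*y₂ ≤ a*(C/2*x₁^2) + (1-a)*(C/2*x₂^2) - C/2*(a*x₁+(1-a)*x₂)^2
      + (a*x₁+(1-a)*x₂)*(a*y₁+(1-a)*y₂)
      + (a*y₁^2 + (1-a)*y₂^2 - (a*y₁+(1-a)*y₂)^2)/(2*C) := by
  have key : (a*(C/2*x₁^2) + (1-a)*(C/2*x₂^2) - C/2*(a*x₁+(1-a)*x₂)^2
      + (a*x₁+(1-a)*x₂)*(a*y₁+(1-a)*y₂)
      + (a*y₁^2 + (1-a)*y₂^2 - (a*y₁+(1-a)*y₂)^2)/(2*C))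
      - (a*x₁*y₁ + (1-a)*x₂*y₂)
      = a*(1-a)/(2*C)*(C*(x₁-x₂)-(y₁-y₂))^2 := by
    field_simp
    ring
  have h0 : 0 ≤ a*(1-a)/(2*C)*(C*(x₁-x₂)-(y₁-y₂))^2 := by positivity
  linarith

/-- If `u₀` is convex on `[0,1]`, smooth on `(0,1)` with `u₀'' ≥ 1/C > 0` there, and `v` is
convex and bounded on `[0,1]`, then the Legendre transform `φ = (u₀ + v)*` satisfies the
distributional inequality `∂²φ ≤ C·dx` (i.e. `x ↦ C x²/2 - φ(x)` is convex); in particular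
`φ` is `C^{1,1}` : differentiable with `C`-Lipschitz derivative. -/
theorem legendre_C11_of_uniform_convexity (C : ℝ) (hC : 0 < C) (u₀ v : ℝ → ℝ)
    (hu₀ : ConvexOn ℝ (Set.Icc (0:ℝ) 1) u₀)
    (hv : ConvexOn ℝ (Set.Icc (0:ℝ) 1) v)
    (hsm : ContDiffOn ℝ (⊤ : ℕ∞) u₀ (Set.Ioo (0:ℝ) 1))
    (hstrict : ∀ y ∈ Set.Ioo (0:ℝ) 1, 1 / C ≤ deriv (deriv u₀) y)
    (hvb : ∃ M, ∀ y ∈ Set.Icc (0:ℝ) 1, |v y| ≤ M)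
    (φ : ℝ → ℝ)
    (hφ : ∀ x, φ x = ⨆ y : Set.Icc (0:ℝ) 1, (x * (y : ℝ) - (u₀ y + v y))) :
    ConvexOn ℝ Set.univ (fun x => C / 2 * x ^ 2 - φ x) ∧
    Differentiable ℝ φ ∧ LipschitzWith C.toNNReal (deriv φ) := by
  obtain ⟨M, hM⟩ := hvb
  haveI neIcc : Nonempty (Set.Icc (0:ℝ) 1) := ⟨⟨0, by norm_num⟩⟩
  haveI neIoo : Nonempty (Set.Ioo (0:ℝ) 1) := ⟨⟨1/2, by norm_num⟩⟩
  set K := max (u₀ 0) (u₀ 1) with hK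
  -- upper bound for u₀ on Icc
  have hup : ∀ y ∈ Set.Icc (0:ℝ) 1, u₀ y ≤ K := by
    intro y hy
    have h := hu₀.2 (left_mem_Icc.2 zero_le_one) (right_mem_Icc.2 zero_le_one)
      (by linarith [hy.2] : (0:ℝ) ≤ 1 - y) hy.1 (by ring)
    simp only [smul_eq_mul, mul_zero, mul_one, zero_add] at h
    have h1 : (1 - y) * 0 + y * 1 = y := by ring
    nlinarith [le_max_left (u₀ 0) (u₀ 1), le_max_right (u₀ 0) (u₀ 1), hy.1, hy.2]
  -- lower bound for u₀ on Icc
  have hlow : ∀ y ∈ Set.Icc (0:ℝ) 1, 2 * u₀ (1/2) - K ≤ u₀ y := by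
    intro y hy
    have h1y : (1:ℝ) - y ∈ Set.Icc (0:ℝ) 1 := ⟨by linarith [hy.2], by linarith [hy.1]⟩
    have h := hu₀.2 hy h1y (by norm_num : (0:ℝ) ≤ 1/2) (by norm_num : (0:ℝ) ≤ 1/2)
      (by norm_num)
    simp only [smul_eq_mul] at h
    have h2 : 1/2 * y + 1/2 * (1 - y) = (1/2:ℝ) := by ring
    rw [h2] at h
    have h3 := hup _ h1y
    linarith
  -- upper bound for the family
  have hub : ∀ x : ℝ, ∀ y ∈ Set.Icc (0:ℝ) 1,
      x * y - (u₀ y + v y) ≤ |x| + (M + K - 2 * u₀ (1/2)) := by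
    intro x y hy
    have h1 : x * y ≤ |x| := by
      calc x * y ≤ |x * y| := le_abs_self _
        _ = |x| * |y| := abs_mul x y
        _ ≤ |x| * 1 := by
            have : |y| ≤ 1 := abs_le.2 ⟨by linarith [hy.1], hy.2⟩
            nlinarith [abs_nonneg x]
        _ = |x| := mul_one _
    have h2 := hlow y hy
    have h3 := (abs_le.1 (hM y hy)).1
    linarith
  have bddIcc : ∀ x : ℝ, BddAbove (Set.range fun y : Set.Icc (0:ℝ) 1 =>
      x * (y : ℝ) - (u₀ y + v y)) := by
    intro x
    refine ⟨|x| + (M + K - 2 * u₀ (1/2)), ?_⟩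
    rintro z ⟨y, rfl⟩
    exact hub x y y.2
  have bddIoo : ∀ x : ℝ, BddAbove (Set.range fun y : Set.Ioo (0:ℝ) 1 =>
      x * (y : ℝ) - (u₀ y + v y)) := by
    intro x
    refine ⟨|x| + (M + K - 2 * u₀ (1/2)), ?_⟩
    rintro z ⟨y, rfl⟩
    exact hub x y (Ioo_subset_Icc_self y.2)
  have hucv : ConvexOn ℝ (Set.Icc (0:ℝ) 1) (fun y => u₀ y + v y) := hu₀.add hv
  -- the sup can be taken over the open interval
  have hφIoo : ∀ x, φ x = ⨆ y : Set.Ioo (0:ℝ) 1, (x * (y : ℝ) - (u₀ y + v y)) := by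
    intro x
    apply le_antisymm
    · rw [hφ x]
      apply ciSup_le
      rintro ⟨y, hy⟩
      by_cases hy0 : y ∈ Set.Ioo (0:ℝ) 1
      · exact le_ciSup (bddIoo x) (⟨y, hy0⟩ : Set.Ioo (0:ℝ) 1)
      · have hcases : y = 0 ∨ y = 1 := by
          rcases eq_or_lt_of_le hy.1 with h | h
          · exact Or.inl h.symm
          · rcases eq_or_lt_of_le hy.2 with h' | h'
            · exact Or.inr h'
            · exact absurd ⟨h, h'⟩ hy0
        rcases hcases with rfl | rfl
        · -- endpoint 0
          have key : ∀ s ∈ Set.Ioo (0:ℝ) (1/2),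
              x * s - ((2*s) * (u₀ (1/2) + v (1/2)) + (1 - 2*s) * (u₀ 0 + v 0)) ≤
                ⨆ y : Set.Ioo (0:ℝ) 1, (x * (y : ℝ) - (u₀ y + v y)) := by
            intro s hs
            have hs' : s ∈ Set.Ioo (0:ℝ) 1 := ⟨hs.1, by linarith [hs.2]⟩
            have hcv := hucv.2 (by norm_num : (1/2:ℝ) ∈ Set.Icc (0:ℝ) 1)
              (by norm_num : (0:ℝ) ∈ Set.Icc (0:ℝ) 1)
              (by linarith [hs.1] : (0:ℝ) ≤ 2*s) (by linarith [hs.2] : (0:ℝ) ≤ 1 - 2*s)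
              (by ring)
            simp only [smul_eq_mul, mul_zero, add_zero] at hcv
            have hpt : 2*s * (1/2) = s := by ring
            rw [hpt] at hcv
            have hle : x * s - (u₀ s + v s) ≤
                ⨆ y : Set.Ioo (0:ℝ) 1, (x * (y : ℝ) - (u₀ y + v y)) :=
              le_ciSup (bddIoo x) (⟨s, hs'⟩ : Set.Ioo (0:ℝ) 1)
            linarith
          have tend : Tendsto (fun s : ℝ =>
              x * s - ((2*s) * (u₀ (1/2) + v (1/2)) + (1 - 2*s) * (u₀ 0 + v 0)))
              (𝓝[>] (0:ℝ)) (𝓝 (x * 0 - (u₀ 0 + v 0))) := by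
            have hcont : Continuous fun s : ℝ =>
                x * s - ((2*s) * (u₀ (1/2) + v (1/2)) + (1 - 2*s) * (u₀ 0 + v 0)) := by
              fun_prop
            have h := hcont.tendsto 0
            have hval : x * 0 - ((2*0) * (u₀ (1/2) + v (1/2)) + (1 - 2*0) * (u₀ 0 + v 0))
                = x * 0 - (u₀ 0 + v 0) := by ring
            rw [hval] at h
            exact h.mono_left nhdsWithin_le_nhds
          exact le_of_tendsto tend (eventually_of_mem
            (Ioo_mem_nhdsGT_of_mem (by norm_num : (0:ℝ) ∈ Set.Ico (0:ℝ) (1/2))) key)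
        · -- endpoint 1
          have key : ∀ s ∈ Set.Ioo (1/2:ℝ) 1,
              x * s - ((2*s - 1) * (u₀ 1 + v 1) + (2 - 2*s) * (u₀ (1/2) + v (1/2))) ≤
                ⨆ y : Set.Ioo (0:ℝ) 1, (x * (y : ℝ) - (u₀ y + v y)) := by
            intro s hs
            have hs' : s ∈ Set.Ioo (0:ℝ) 1 := ⟨by linarith [hs.1], hs.2⟩
            have hcv := hucv.2 (by norm_num : (1:ℝ) ∈ Set.Icc (0:ℝ) 1)
              (by norm_num : (1/2:ℝ) ∈ Set.Icc (0:ℝ) 1)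
              (by linarith [hs.1] : (0:ℝ) ≤ 2*s - 1) (by linarith [hs.2] : (0:ℝ) ≤ 2 - 2*s)
              (by ring)
            simp only [smul_eq_mul, mul_one] at hcv
            have hpt : (2*s - 1) + (2 - 2*s) * (1/2) = s := by ring
            rw [hpt] at hcv
            have hle : x * s - (u₀ s + v s) ≤
                ⨆ y : Set.Ioo (0:ℝ) 1, (x * (y : ℝ) - (u₀ y + v y)) :=
              le_ciSup (bddIoo x) (⟨s, hs'⟩ : Set.Ioo (0:ℝ) 1)
            linarith
          have tend : Tendsto (fun s : ℝ =>
              x * s - ((2*s - 1) * (u₀ 1 + v 1) + (2 - 2*s) * (u₀ (1/2) + v (1/2))))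
              (𝓝[<] (1:ℝ)) (𝓝 (x * 1 - (u₀ 1 + v 1))) := by
            have hcont : Continuous fun s : ℝ =>
                x * s - ((2*s - 1) * (u₀ 1 + v 1) + (2 - 2*s) * (u₀ (1/2) + v (1/2))) := by
              fun_prop
            have h := hcont.tendsto 1
            have hval : x * 1 - ((2*1 - 1) * (u₀ 1 + v 1) + (2 - 2*1) * (u₀ (1/2) + v (1/2)))
                = x * 1 - (u₀ 1 + v 1) := by ring
            rw [hval] at h
            exact h.mono_left nhdsWithin_le_nhds
          exact le_of_tendsto tend (eventually_of_mem
            (Ioo_mem_nhdsLT_of_mem (by norm_num : (1:ℝ) ∈ Set.Ioc (1/2:ℝ) 1)) key)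
    · apply ciSup_le
      rintro ⟨y, hy⟩
      rw [hφ x]
      exact le_ciSup (bddIcc x) (⟨y, Ioo_subset_Icc_self hy⟩ : Set.Icc (0:ℝ) 1)
  -- φ is convex
  have hφconv : ConvexOn ℝ Set.univ φ := by
    refine ⟨convex_univ, ?_⟩
    intro x₁ _ x₂ _ a b ha hb hab
    simp only [smul_eq_mul]
    have hb1 : b = 1 - a := by linarith
    subst hb1
    rw [hφ (a * x₁ + (1 - a) * x₂)]
    apply ciSup_le
    rintro ⟨y, hy⟩
    have h1 : x₁ * y - (u₀ y + v y) ≤ φ x₁ := by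
      rw [hφ x₁]; exact le_ciSup (bddIcc x₁) (⟨y, hy⟩ : Set.Icc (0:ℝ) 1)
    have h2 : x₂ * y - (u₀ y + v y) ≤ φ x₂ := by
      rw [hφ x₂]; exact le_ciSup (bddIcc x₂) (⟨y, hy⟩ : Set.Icc (0:ℝ) 1)
    show (a * x₁ + (1 - a) * x₂) * y - (u₀ y + v y) ≤ a * φ x₁ + (1 - a) * φ x₂
    nlinarith [mul_le_mul_of_nonneg_left h1 ha, mul_le_mul_of_nonneg_left h2 hb]
  -- the semiconcavity
  have hψconv : ConvexOn ℝ Set.univ (fun x => C / 2 * x ^ 2 - φ x) := by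
    refine ⟨convex_univ, ?_⟩
    intro x₁ _ x₂ _ a b ha hb hab
    simp only [smul_eq_mul]
    have hb1 : b = 1 - a := by linarith
    subst hb1
    rcases eq_or_lt_of_le ha with h0 | ha'
    · rw [← h0]; norm_num
    rcases eq_or_lt_of_le hb with h0 | hb'
    · have h0' : a = 1 := by linarith
      rw [h0']; norm_num
    have hg := (aux_strong hC hsm hstrict).add
      (hv.subset Ioo_subset_Icc_self (convex_Ioo 0 1))
    have key : ∀ y₁ ∈ Set.Ioo (0:ℝ) 1, ∀ y₂ ∈ Set.Ioo (0:ℝ) 1,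
        a * (x₁ * y₁ - (u₀ y₁ + v y₁)) + (1 - a) * (x₂ * y₂ - (u₀ y₂ + v y₂)) ≤
          a * (C/2*x₁^2) + (1 - a) * (C/2*x₂^2) - C/2*(a * x₁ + (1 - a) * x₂)^2 + φ (a * x₁ + (1 - a) * x₂) := by
      intro y₁ hy₁ y₂ hy₂
      have hyc : a * y₁ + (1 - a) * y₂ ∈ Set.Ioo (0:ℝ) 1 := by
        constructor <;> nlinarith [hy₁.1, hy₁.2, hy₂.1, hy₂.2]
      have hφc : (a * x₁ + (1 - a) * x₂) * (a * y₁ + (1 - a) * y₂) -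
          (u₀ (a * y₁ + (1 - a) * y₂) + v (a * y₁ + (1 - a) * y₂)) ≤ φ (a * x₁ + (1 - a) * x₂) := by
        rw [hφIoo (a * x₁ + (1 - a) * x₂)]
        exact le_ciSup (bddIoo (a * x₁ + (1 - a) * x₂)) (⟨_, hyc⟩ : Set.Ioo (0:ℝ) 1)
      have hgc := hg.2 hy₁ hy₂ ha hb hab
      simp only [smul_eq_mul, Pi.add_apply] at hgc
      have halg := aux_alg C a x₁ x₂ y₁ y₂ hC ha hb
      ring_nf at hφc hgc halg ⊢
      linarith
    have hsuff : a * φ x₁ + (1 - a) * φ x₂ ≤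
        a * (C/2*x₁^2) + (1 - a) * (C/2*x₂^2) - C/2*(a * x₁ + (1 - a) * x₂)^2 + φ (a * x₁ + (1 - a) * x₂) := by
      have step1 : φ x₁ ≤ (a * (C/2*x₁^2) + (1 - a) * (C/2*x₂^2) - C/2*(a * x₁ + (1 - a) * x₂)^2 + φ (a * x₁ + (1 - a) * x₂)
          - (1 - a) * φ x₂) / a := by
        rw [hφIoo x₁]
        apply ciSup_le
        rintro ⟨y₁, hy₁⟩
        rw [le_div_iff₀ ha']
        have step2 : φ x₂ ≤ (a * (C/2*x₁^2) + (1 - a) * (C/2*x₂^2) - C/2*(a * x₁ + (1 - a) * x₂)^2 + φ (a * x₁ + (1 - a) * x₂)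
            - a * (x₁ * y₁ - (u₀ y₁ + v y₁))) / (1 - a) := by
          rw [hφIoo x₂]
          apply ciSup_le
          rintro ⟨y₂, hy₂⟩
          rw [le_div_iff₀ hb']
          have hk := key y₁ hy₁ y₂ hy₂
          linarith
        have step2' := mul_le_mul_of_nonneg_left step2 hb
        rw [mul_div_cancel₀ _ (ne_of_gt hb')] at step2'
        linarith
      have step1' := mul_le_mul_of_nonneg_left step1 ha
      rw [mul_div_cancel₀ _ (ne_of_gt ha')] at step1'
      linarith
    nlinarith [hsuff]
  obtain ⟨hdiff, hlip⟩ := aux_c11 hC.le hφconv hψconv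
  exact ⟨hψconv, hdiff, hlip⟩
end

section
/- Let φ be a convex function on ℝ whose second distributional derivative ∂²φ is a probability measure absolutely continuous with respect to Lebesgue measure, with density ρ = φ''. Let u = φ* be its Legendre transform, with subgradient image contained in [0,1], and suppose ∫_ℝ ρ log ρ dx is finite. Then u''(y) > 0 for a.e. y ∈ (0,1) (Alexandrov second derivative) and ∫_ℝ φ''(x) log φ''(x) dx = -∫_0^1 log(u''(y)) dy. -/
/-!
Write `F = φ'`. Since `F b - F a = ∫_a^b ρ`, `F` is continuous, monotone, with derivative `ρ`
almost everywhere. On the set `S` where `F' > 0` it is injective, and by the change of variables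
formula `F(S)` has full measure in `(0,1)`. For `x ∈ S` the Fenchel equality
`u (F x) = x F x - φ x` together with the second-order Taylor expansion of `φ` at `x`, read
through `y = F x'`, shows that `u` has Alexandrov second derivative `1 / F' x` at `F x`. Hence
`-log u''(F x) = log ρ x`, and the substitution `y = F x` turns `∫ ρ log ρ` into
`-∫_0^1 log u''`.
-/

open MeasureTheory Filter Topology Set

theorem Monotone.apply_ne_of_hasDerivAt {F : ℝ → ℝ} {x x₀ ρ₀ : ℝ} (hF : Monotone F)
    (hx₀ : HasDerivAt F ρ₀ x₀) (hρ₀ : ρ₀ ≠ 0) (hx : x ≠ x₀) : F x ≠ F x₀ := by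
  intro hFx
  have hconst : ∀ t ∈ uIcc x x₀, F t = F x₀ := fun t ht => by
    simpa [hFx] using hF.image_uIcc_subset (mem_image_of_mem F ht)
  have hunique : UniqueDiffWithinAt ℝ (uIcc x x₀) x₀ :=
    uniqueDiffOn_Icc (min_lt_max.2 hx) x₀ right_mem_uIcc
  exact hρ₀ (hunique.eq_deriv _ hx₀.hasDerivWithinAt
    ((hasDerivWithinAt_const x₀ _ (F x₀)).congr hconst rfl))

theorem Monotone.tendsto_of_hasDerivAt {α : Type*} {l : Filter α} {g : α → ℝ} {F : ℝ → ℝ}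
    {x₀ ρ₀ : ℝ} (hF : Monotone F) (hx₀ : HasDerivAt F ρ₀ x₀) (hρ₀ : ρ₀ ≠ 0)
    (hg : Tendsto (fun i => F (g i)) l (𝓝 (F x₀))) : Tendsto g l (𝓝 x₀) := by
  refine tendsto_order.2 ⟨fun a ha => ?_, fun b hb => ?_⟩
  · have hlt : F a < F x₀ := (hF ha.le).lt_of_ne (hF.apply_ne_of_hasDerivAt hx₀ hρ₀ ha.ne)
    filter_upwards [(tendsto_order.1 hg).1 _ hlt] with i hi
    exact lt_of_not_ge fun h => (hF h).not_gt hi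
  · have hlt : F x₀ < F b := (hF hb.le).lt_of_ne' (hF.apply_ne_of_hasDerivAt hx₀ hρ₀ hb.ne')
    filter_upwards [(tendsto_order.1 hg).2 _ hlt] with i hi
    exact lt_of_not_ge fun h => (hF h).not_gt hi

theorem isLittleO_taylor_two {φ F : ℝ → ℝ} {x₀ ρ₀ : ℝ}
    (hφ : ∀ᶠ x in 𝓝 x₀, HasDerivAt φ (F x) x) (hF : HasDerivAt F ρ₀ x₀) :
    (fun x => φ x - φ x₀ - F x₀ * (x - x₀) - ρ₀ / 2 * (x - x₀) ^ 2) =o[𝓝 x₀]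
      fun x => (x - x₀) ^ 2 := by
  have hr : ∀ᶠ x in 𝓝 x₀, HasDerivAt
      (fun x => φ x - φ x₀ - F x₀ * (x - x₀) - ρ₀ / 2 * (x - x₀) ^ 2)
      (F x - F x₀ - (x - x₀) * ρ₀) x := hφ.mono fun x hx => by
    have hlin := (hasDerivAt_id' x).sub_const x₀
    exact (((hx.sub_const (φ x₀)).fun_sub (hlin.const_mul (F x₀))).fun_sub
      ((hlin.fun_pow 2).const_mul (ρ₀ / 2))).congr_deriv (by ring)
  refine Asymptotics.IsLittleO.of_bound fun ε hε => ?_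
  obtain ⟨δ, hδ, hball⟩ := Metric.eventually_nhds_iff_ball.1
    (((hasDerivAt_iff_isLittleO.1 hF).def hε).and hr)
  filter_upwards [Metric.ball_mem_nhds x₀ hδ] with x hx
  have hsub : Metric.closedBall x₀ (dist x x₀) ⊆ Metric.ball x₀ δ :=
    Metric.closedBall_subset_ball hx
  have hmvt := (convex_closedBall x₀ (dist x x₀)).norm_image_sub_le_of_norm_hasDerivWithin_le
    (fun t ht => (hball t (hsub ht)).2.hasDerivWithinAt)
    (fun t ht => (hball t (hsub ht)).1.trans
      (mul_le_mul_of_nonneg_left (by simpa [← dist_eq_norm] using ht) hε.le))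
    (Metric.mem_closedBall_self dist_nonneg) (Metric.mem_closedBall.2 le_rfl)
  simpa [norm_pow, ← dist_eq_norm, mul_assoc, sq] using hmvt

theorem tendsto_symmSecondDiff {u : ℝ → ℝ} {y₀ a c : ℝ}
    (h : Tendsto (fun y => (u y - u y₀ - a * (y - y₀)) / (y - y₀) ^ 2) (𝓝[≠] y₀) (𝓝 c)) :
    Tendsto (fun k => (u (y₀ + k) + u (y₀ - k) - 2 * u y₀) / k ^ 2) (𝓝[≠] 0) (𝓝 (2 * c)) := by
  have hshift : ∀ s : ℝ, s ≠ 0 → Tendsto (fun k => y₀ + s * k) (𝓝[≠] 0) (𝓝[≠] y₀) := fun s hs =>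
    tendsto_nhdsWithin_of_tendsto_nhds_of_eventually_within _
      ((Continuous.tendsto' (by fun_prop) 0 y₀ (by simp)).mono_left nhdsWithin_le_nhds)
      (eventually_nhdsWithin_of_forall fun k hk => by simpa [hs] using hk)
  refine (((h.comp (hshift 1 one_ne_zero)).add (h.comp (hshift (-1) (by norm_num)))).congr'
    ?_).trans (by rw [two_mul])
  filter_upwards [self_mem_nhdsWithin] with k hk
  simp only [Function.comp_apply, one_mul, neg_one_mul, add_sub_cancel_left,
    ← sub_eq_add_neg]
  field_simp
  ring

theorem tendsto_div_sq_sub_of_hasDerivAt {φ F : ℝ → ℝ} {x₀ ρ₀ : ℝ}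
    (hφ : ∀ᶠ x in 𝓝 x₀, HasDerivAt φ (F x) x) (hF : HasDerivAt F ρ₀ x₀) (hρ₀ : ρ₀ ≠ 0) :
    Tendsto (fun x => ((x - x₀) * F x - (φ x - φ x₀)) / (F x - F x₀) ^ 2) (𝓝[≠] x₀)
      (𝓝 (1 / (2 * ρ₀))) := by
  have hslope := hasDerivAt_iff_tendsto_slope.1 hF
  have hrem := (isLittleO_taylor_two hφ hF).tendsto_div_nhds_zero.mono_left
    (nhdsWithin_le_nhds (s := {x₀}ᶜ))
  have hlim := ((hslope.sub_const (ρ₀ / 2)).sub hrem).div (hslope.pow 2) (pow_ne_zero 2 hρ₀)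
  rw [show (ρ₀ - ρ₀ / 2 - 0) / ρ₀ ^ 2 = 1 / (2 * ρ₀) by field_simp; ring] at hlim
  refine hlim.congr' ?_
  filter_upwards [self_mem_nhdsWithin] with x hx
  have hx' : x - x₀ ≠ 0 := sub_ne_zero.2 hx
  have hnum : slope F x₀ x - ρ₀ / 2 - (φ x - φ x₀ - F x₀ * (x - x₀) - ρ₀ / 2 * (x - x₀) ^ 2) /
      (x - x₀) ^ 2 = ((x - x₀) * F x - (φ x - φ x₀)) / (x - x₀) ^ 2 := by
    rw [slope_def_field]
    field_simp
    ring
  rw [Pi.div_apply, hnum, slope_def_field, div_pow, div_div_div_cancel_right₀ (pow_ne_zero 2 hx')]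

theorem ConvexOn.iSup_mul_sub_eq_of_hasDerivAt {φ : ℝ → ℝ} {x a : ℝ} (hφ : ConvexOn ℝ univ φ)
    (hx : HasDerivAt φ a x) : ⨆ z, (z * a - φ z) = x * a - φ x := by
  have htangent : ∀ z, φ x + a * (z - x) ≤ φ z := fun z => by
    rcases lt_trichotomy x z with h | rfl | h
    · have := hφ.le_slope_of_hasDerivAt trivial trivial h hx
      rw [slope_def_field, le_div_iff₀ (sub_pos.2 h)] at this
      linarith
    · simp
    · have := hφ.slope_le_of_hasDerivAt trivial trivial h hx
      rw [slope_def_field, div_le_iff₀ (sub_pos.2 h)] at this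
      linarith
  have hle : ∀ z, z * a - φ z ≤ x * a - φ x := fun z => by linarith [htangent z]
  exact le_antisymm (ciSup_le hle) (le_ciSup ⟨_, forall_mem_range.2 hle⟩ x)

theorem ConvexOn.monotone_of_hasDerivAt {φ F : ℝ → ℝ} (hφ : ConvexOn ℝ univ φ)
    (hF : ∀ x, HasDerivAt φ (F x) x) : Monotone F := fun a b hab => by
  simpa only [(hF _).deriv] using
    hφ.monotoneOn_deriv (fun x _ => (hF x).differentiableAt) trivial trivial hab

theorem ConvexOn.tendsto_legendre_symmSecondDiff {φ F u : ℝ → ℝ} {x₀ ρ₀ y₀ : ℝ}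
    (hφ : ConvexOn ℝ univ φ) (hF : ∀ x, HasDerivAt φ (F x) x)
    (hu : ∀ y, u y = ⨆ x, (x * y - φ x)) (hx₀ : HasDerivAt F ρ₀ x₀) (hρ₀ : ρ₀ ≠ 0)
    (hy₀ : F x₀ = y₀) (hrange : range F ∈ 𝓝 y₀) :
    Tendsto (fun h => (u (y₀ + h) + u (y₀ - h) - 2 * u y₀) / h ^ 2) (𝓝[≠] 0) (𝓝 (1 / ρ₀)) := by
  subst hy₀
  have hu_F : ∀ x, u (F x) = x * F x - φ x := fun x =>
    (hu _).trans (hφ.iSup_mul_sub_eq_of_hasDerivAt (hF x))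
  have hFG : ∀ᶠ y in 𝓝 (F x₀), F (Function.invFun F y) = y :=
    Eventually.mono hrange fun y hy => Function.invFun_eq hy
  have hG : Tendsto (Function.invFun F) (𝓝[≠] F x₀) (𝓝[≠] x₀) := by
    refine tendsto_nhdsWithin_iff.2 ⟨?_, ?_⟩
    · exact ((hφ.monotone_of_hasDerivAt hF).tendsto_of_hasDerivAt hx₀ hρ₀
        (tendsto_id.congr' (hFG.mono fun y hy => hy.symm))).mono_left nhdsWithin_le_nhds
    · filter_upwards [self_mem_nhdsWithin, nhdsWithin_le_nhds hFG] with y hy hFy hGy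
      exact hy (hFy.symm.trans (congrArg F hGy))
  have hlim := (tendsto_div_sq_sub_of_hasDerivAt (Eventually.of_forall hF) hx₀ hρ₀).comp hG
  refine (tendsto_symmSecondDiff (a := x₀) (hlim.congr' ?_)).trans (by rw [mul_one_div,
    div_mul_cancel_left₀ two_ne_zero, one_div])
  filter_upwards [nhdsWithin_le_nhds hFG] with y hy
  have huy := hu_F (Function.invFun F y)
  rw [hy] at huy
  rw [Function.comp_apply, hy, huy, hu_F]
  ring

section DistributionFunction

variable {F ρ : ℝ → ℝ} (hF : ∀ a b, a ≤ b → F b - F a = ∫ x in Ioc a b, ρ x)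
include hF

theorem sub_eq_intervalIntegral_of_sub_eq_setIntegral (a b : ℝ) :
    F b - F a = ∫ x in a..b, ρ x := by
  rcases le_total a b with h | h
  · rw [intervalIntegral.integral_of_le h, hF a b h]
  · rw [intervalIntegral.integral_of_ge h, ← hF b a h]
    ring

theorem eq_add_intervalIntegral_of_sub_eq_setIntegral :
    F = fun x => F 0 + ∫ t in (0 : ℝ)..x, ρ t :=
  funext fun x => eq_add_of_sub_eq' (sub_eq_intervalIntegral_of_sub_eq_setIntegral hF 0 x)

theorem ae_eq_deriv_of_sub_eq_setIntegral (hρ : LocallyIntegrable ρ volume) :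
    ρ =ᵐ[volume] deriv F := by
  filter_upwards [LocallyIntegrable.ae_hasDerivAt_integral hρ] with x hx
  rw [eq_add_intervalIntegral_of_sub_eq_setIntegral hF]
  exact ((hx 0).const_add _).deriv.symm

theorem continuous_of_sub_eq_setIntegral (hρ : Integrable ρ) : Continuous F := by
  rw [eq_add_intervalIntegral_of_sub_eq_setIntegral hF]
  exact continuous_const.add
    (intervalIntegral.continuous_primitive (fun _ _ => hρ.intervalIntegrable) 0)

theorem tendsto_sub_neg_of_sub_eq_setIntegral (hρ : Integrable ρ) :
    Tendsto (fun x => F x - F (-x)) atTop (𝓝 (∫ x, ρ x)) :=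
  (intervalIntegral_tendsto_integral hρ tendsto_neg_atTop_atBot tendsto_id).congr
    fun x => (sub_eq_intervalIntegral_of_sub_eq_setIntegral hF (-x) x).symm

theorem Monotone.lintegral_ofReal_deriv_of_sub_eq_setIntegral (hmono : Monotone F)
    (hρ : Integrable ρ) : ∫⁻ x, ENNReal.ofReal (deriv F x) = ENNReal.ofReal (∫ x, ρ x) := by
  have hρF := ae_eq_deriv_of_sub_eq_setIntegral hF hρ.locallyIntegrable
  rw [ofReal_integral_eq_lintegral_ofReal hρ (hρF.mono fun x hx => hx ▸ hmono.deriv_nonneg)]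
  exact lintegral_congr_ae (hρF.fun_comp ENNReal.ofReal).symm

end DistributionFunction

theorem Ioo_subset_range_of_tendsto_sub_neg {F : ℝ → ℝ} {a b : ℝ} (hc : Continuous F)
    (hr : ∀ x, F x ∈ Icc a b) (h : Tendsto (fun x => F x - F (-x)) atTop (𝓝 (b - a))) :
    Ioo a b ⊆ range F := by
  intro y hy
  obtain ⟨x, hx⟩ := (h.eventually (lt_mem_nhds (max_lt (sub_lt_sub_right hy.2 a)
    (sub_lt_sub_left hy.1 b)))).exists
  obtain ⟨hxa, hxb⟩ := max_lt_iff.1 hx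
  exact mem_range_of_exists_le_of_exists_ge hc
    ⟨-x, by linarith [(hr x).2]⟩ ⟨x, by linarith [(hr (-x)).1]⟩

def posDerivSet (F : ℝ → ℝ) : Set ℝ := {x | DifferentiableAt ℝ F x ∧ 0 < deriv F x}

section PosDerivSet

variable {F : ℝ → ℝ}

theorem measurableSet_posDerivSet : MeasurableSet (posDerivSet F) :=
  (measurableSet_of_differentiableAt ℝ F).inter
    (measurableSet_lt measurable_const (measurable_deriv F))

theorem hasDerivWithinAt_posDerivSet {x : ℝ} (hx : x ∈ posDerivSet F) :
    HasDerivWithinAt F (deriv F x) (posDerivSet F) x :=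
  hx.1.hasDerivAt.hasDerivWithinAt

variable (hF : Monotone F)
include hF

theorem Monotone.deriv_eq_zero_of_notMem_posDerivSet {x : ℝ} (hx : x ∉ posDerivSet F) :
    deriv F x = 0 := by
  by_cases hd : DifferentiableAt ℝ F x
  · exact le_antisymm (not_lt.1 fun h => hx ⟨hd, h⟩) hF.deriv_nonneg
  · exact deriv_zero_of_not_differentiableAt hd

theorem Monotone.injOn_posDerivSet : InjOn F (posDerivSet F) := fun _ _ _ hb hab =>
  by_contra fun hne => hF.apply_ne_of_hasDerivAt hb.1.hasDerivAt hb.2.ne' hne hab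

theorem Monotone.image_posDerivSet_subset_Ioo {a b : ℝ} (hr : ∀ x, F x ∈ Icc a b) :
    F '' posDerivSet F ⊆ Ioo a b := by
  rintro _ ⟨x, hx, rfl⟩
  have hne : ∀ t ≠ x, F t ≠ F x := fun t ht =>
    hF.apply_ne_of_hasDerivAt hx.1.hasDerivAt hx.2.ne' ht
  refine ⟨(hr x).1.lt_of_ne fun h => hne (x - 1) (by linarith) ?_,
    (hr x).2.lt_of_ne fun h => hne (x + 1) (by linarith) ?_⟩
  · exact le_antisymm (hF (by linarith)) (h ▸ (hr _).1)
  · exact le_antisymm (h ▸ (hr _).2) (hF (by linarith))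

variable {a b : ℝ} (hr : ∀ x, F x ∈ Icc a b)
  (hmass : ∫⁻ x, ENNReal.ofReal (deriv F x) = ENNReal.ofReal (b - a))
include hr hmass

theorem Monotone.image_posDerivSet_ae_eq_Ioo : F '' posDerivSet F =ᵐ[volume] Ioo a b := by
  have hvol : volume (F '' posDerivSet F) = ENNReal.ofReal (b - a) := by
    rw [← setLIntegral_one, lintegral_image_eq_lintegral_abs_deriv_mul measurableSet_posDerivSet
      (fun _ => hasDerivWithinAt_posDerivSet) hF.injOn_posDerivSet, ← hmass]
    simp only [abs_of_nonneg hF.deriv_nonneg, mul_one]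
    refine setLIntegral_eq_of_support_subset fun x hx => ?_
    by_contra h
    exact hx (by simp [hF.deriv_eq_zero_of_notMem_posDerivSet h])
  refine ae_eq_of_subset_of_measure_ge (hF.image_posDerivSet_subset_Ioo hr)
    (by rw [hvol, Real.volume_Ioo]) ?_ (by simp)
  exact (measurableSet_posDerivSet.image_of_continuousOn_injOn
    (fun x hx => hx.1.continuousAt.continuousWithinAt) hF.injOn_posDerivSet).nullMeasurableSet

theorem Monotone.setIntegral_Ioo_eq_integral_deriv_mul (g : ℝ → ℝ) :
    ∫ y in Ioo a b, g y = ∫ x, deriv F x * g (F x) := by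
  have habs : ∀ x, |deriv F x| = deriv F x := fun x => abs_of_nonneg hF.deriv_nonneg
  rw [← setIntegral_congr_set (hF.image_posDerivSet_ae_eq_Ioo hr hmass),
    integral_image_eq_integral_abs_deriv_smul measurableSet_posDerivSet
      (fun _ => hasDerivWithinAt_posDerivSet) hF.injOn_posDerivSet]
  simp only [habs, smul_eq_mul]
  exact setIntegral_eq_integral_of_ae_compl_eq_zero (ae_of_all _ fun x hx => by
    rw [hF.deriv_eq_zero_of_notMem_posDerivSet hx, zero_mul])

theorem Monotone.setIntegral_Ioo_comp_deriv_invFunOn (g : ℝ → ℝ) :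
    ∫ y in Ioo a b, g (deriv F (Function.invFunOn F (posDerivSet F) y)) =
      ∫ x, deriv F x * g (deriv F x) := by
  rw [hF.setIntegral_Ioo_eq_integral_deriv_mul hr hmass]
  congr 1 with x
  by_cases hx : x ∈ posDerivSet F
  · rw [hF.injOn_posDerivSet.leftInvOn_invFunOn hx]
  · rw [hF.deriv_eq_zero_of_notMem_posDerivSet hx, zero_mul, zero_mul]

end PosDerivSet

theorem entropy_via_legendre_general (φ ρ w u : ℝ → ℝ)
    (hconv : ConvexOn ℝ Set.univ φ) (hdiff : Differentiable ℝ φ)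
    -- `∂²φ` is absolutely continuous with density `ρ`:
    (hac : ∀ a b : ℝ, a ≤ b → deriv φ b - deriv φ a = ∫ x in Set.Ioc a b, ρ x)
    -- `∂²φ` is a probability measure:
    (hprob : ∫ x, ρ x = 1)
    -- the subgradient image of `φ` is contained in `[0,1]`:
    (hrange : ∀ x, deriv φ x ∈ Set.Icc (0:ℝ) 1)
    -- `u = φ*` is the Legendre transform:
    (hu : ∀ y, u y = ⨆ x : ℝ, (x * y - φ x))
    -- `w` is the Alexandrov second derivative of `u` a.e. on `(0,1)`:
    (hw : ∀ᵐ y ∂(volume.restrict (Set.Ioo (0:ℝ) 1)),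
      Tendsto (fun h : ℝ => (u (y + h) + u (y - h) - 2 * u y) / h ^ 2)
        (𝓝[≠] 0) (𝓝 (w y))) :
    (∀ᵐ y ∂(volume.restrict (Set.Ioo (0:ℝ) 1)), 0 < w y) ∧
    ∫ x, ρ x * Real.log (ρ x) = -∫ y in Set.Ioo (0:ℝ) 1, Real.log (w y) := by
  set F := deriv φ
  have hφF : ∀ x, HasDerivAt φ (F x) x := fun x => (hdiff x).hasDerivAt
  have hmono : Monotone F := hconv.monotone_of_hasDerivAt hφF
  have hρ : Integrable ρ := .of_integral_ne_zero (by rw [hprob]; exact one_ne_zero)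
  have hmass : ∫⁻ x, ENNReal.ofReal (deriv F x) = ENNReal.ofReal (1 - 0) := by
    rw [hmono.lintegral_ofReal_deriv_of_sub_eq_setIntegral hac hρ, hprob, sub_zero]
  have hsurj : Ioo 0 1 ⊆ range F := Ioo_subset_range_of_tendsto_sub_neg
    (continuous_of_sub_eq_setIntegral hac hρ) hrange
    (by simpa [hprob] using tendsto_sub_neg_of_sub_eq_setIntegral hac hρ)
  set S := posDerivSet F
  set G := Function.invFunOn F S
  have hwG : ∀ᵐ y ∂volume.restrict (Ioo 0 1), G y ∈ S ∧ w y = 1 / deriv F (G y) := by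
    filter_upwards [hw, ae_restrict_mem measurableSet_Ioo,
      ae_restrict_of_ae (hmono.image_posDerivSet_ae_eq_Ioo hrange hmass)] with y hy hyI hyS
    replace hyS : y ∈ F '' S := hyS.mpr hyI
    have hGS := Function.invFunOn_mem hyS
    exact ⟨hGS, tendsto_nhds_unique hy (hconv.tendsto_legendre_symmSecondDiff hφF hu
      hGS.1.hasDerivAt hGS.2.ne' (Function.invFunOn_eq hyS)
      (mem_of_superset (Ioo_mem_nhds hyI.1 hyI.2) hsurj))⟩
  refine ⟨hwG.mono fun y ⟨hGS, hy⟩ => hy ▸ one_div_pos.2 hGS.2, ?_⟩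
  calc ∫ x, ρ x * Real.log (ρ x) = ∫ x, deriv F x * Real.log (deriv F x) :=
        integral_congr_ae ((ae_eq_deriv_of_sub_eq_setIntegral hac hρ.locallyIntegrable).mono
          fun x hx => by simp only [hx])
    _ = ∫ y in Ioo 0 1, Real.log (deriv F (G y)) :=
        (hmono.setIntegral_Ioo_comp_deriv_invFunOn hrange hmass Real.log).symm
    _ = -∫ y in Ioo 0 1, Real.log (w y) := by
        rw [← integral_neg]
        refine setIntegral_congr_ae measurableSet_Ioo
          ((ae_restrict_iff' measurableSet_Ioo).1 (hwG.mono fun y ⟨_, hy⟩ => ?_))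
        rw [hy, one_div, Real.log_inv, neg_neg]

/-- One-dimensional case of McCann's change-of-variables theorem: if `φ` is convex on `ℝ`,
with `∂²φ` a probability measure absolutely continuous wrt Lebesgue measure with density
`ρ = φ''`, the subgradient image is contained in `[0,1]`, and `∫ ρ log ρ` is finite, then the
Alexandrov second derivative `u''` of the Legendre transform `u = φ*` is positive a.e. on
`(0,1)` and `∫_ℝ φ'' log φ'' dx = -∫_0^1 log(u''(y)) dy`. -/
theorem entropy_via_legendre (φ ρ w u : ℝ → ℝ)
    (hconv : ConvexOn ℝ Set.univ φ) (hdiff : Differentiable ℝ φ)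
    (hρpos : ∀ x, 0 ≤ ρ x) (hρmeas : Measurable ρ)
    (hρint : Integrable ρ)
    -- `∂²φ` is absolutely continuous with density `ρ`:
    (hac : ∀ a b : ℝ, a ≤ b → deriv φ b - deriv φ a = ∫ x in Set.Ioc a b, ρ x)
    -- `∂²φ` is a probability measure:
    (hprob : ∫ x, ρ x = 1)
    -- the subgradient image of `φ` is contained in `[0,1]`:
    (hrange : ∀ x, deriv φ x ∈ Set.Icc (0:ℝ) 1)
    -- `u = φ*` is the Legendre transform:
    (hu : ∀ y, u y = ⨆ x : ℝ, (x * y - φ x))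
    -- finite entropy:
    (hent : Integrable (fun x => ρ x * Real.log (ρ x)))
    -- `w` is the Alexandrov second derivative of `u` a.e. on `(0,1)`:
    (hw : ∀ᵐ y ∂(volume.restrict (Set.Ioo (0:ℝ) 1)),
      Tendsto (fun h : ℝ => (u (y + h) + u (y - h) - 2 * u y) / h ^ 2)
        (𝓝[≠] 0) (𝓝 (w y))) :
    (∀ᵐ y ∂(volume.restrict (Set.Ioo (0:ℝ) 1)), 0 < w y) ∧
    ∫ x, ρ x * Real.log (ρ x) = -∫ y in Set.Ioo (0:ℝ) 1, Real.log (w y) :=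
  entropy_via_legendre_general φ ρ w u hconv hdiff hac hprob hrange hu hw
end

section
/- Let φ be a piecewise defined convex function on ℝ such that φ'' = 0 on a closed interval I and φ' restricts to a diffeomorphism from ℝ \ I onto (0,1) \ {c} for some c ∈ (0,1), with φ'' smooth and positive on ℝ \ I. Let u = φ*. Then ∫_ℝ φ''(x) log φ''(x) dx = -∫_0^1 log(u''(y)) dy, where u'' denotes the density of the regular (absolutely continuous) part of ∂²u. -/
open MeasureTheory Filter Topology

/-- Direct case of the change-of-variables formula: `φ` convex on `ℝ` with `φ'' = 0` on a
closed interval `I = [a,b]` and `φ'` restricting to a diffeomorphism of `ℝ \ I` onto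
`(0,1) \ {c}` (with `φ''` smooth and positive on `ℝ \ I`). Then
`∫_ℝ φ'' log φ'' dx = -∫_0^1 log(u''(y)) dy`, where `u = φ*` and `u''` is the density of the
absolutely continuous part of `∂²u`. -/
theorem entropy_via_legendre_flat_piece (a b c : ℝ) (hab : a ≤ b)
    (hc : c ∈ Set.Ioo (0:ℝ) 1) (φ u w : ℝ → ℝ)
    (hconv : ConvexOn ℝ Set.univ φ) (hdiff : Differentiable ℝ φ)
    -- `φ'' = 0` on `I`, i.e. `φ'` is constant (`= c`) there:
    (hflat : ∀ x ∈ Set.Icc a b, deriv φ x = c)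
    -- `φ''` smooth and positive on the complement of `I`:
    (hsm : ContDiffOn ℝ (⊤ : ℕ∞) (deriv φ) (Set.Icc a b)ᶜ)
    (hpos : ∀ x ∉ Set.Icc a b, 0 < deriv (deriv φ) x)
    -- `φ'` maps `ℝ \ I` diffeomorphically onto `(0,1) \ {c}`:
    (himage : (deriv φ) '' (Set.Icc a b)ᶜ = Set.Ioo (0:ℝ) 1 \ {c})
    (hinj : Set.InjOn (deriv φ) (Set.Icc a b)ᶜ)
    (hrange : Set.range (deriv φ) = Set.Ioo (0:ℝ) 1)
    -- `u = φ*` is the Legendre transform: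
    (hu : ∀ y, u y = ⨆ x : ℝ, (x * y - φ x))
    -- `w` is the density of the regular part of `∂²u`, i.e. the Alexandrov second
    -- derivative of `u`, a.e. on `(0,1)`:
    (hw : ∀ᵐ y ∂(volume.restrict (Set.Ioo (0:ℝ) 1)),
      Tendsto (fun h : ℝ => (u (y + h) + u (y - h) - 2 * u y) / h ^ 2)
        (𝓝[≠] 0) (𝓝 (w y))) :
    ∫ x, deriv (deriv φ) x * Real.log (deriv (deriv φ) x)
      = -∫ y in Set.Ioo (0:ℝ) 1, Real.log (w y) := by
  have hTopen : IsOpen (Set.Icc a b)ᶜ := isClosed_Icc.isOpen_compl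
  have hKm : MeasurableSet (Set.Icc a b)ᶜ := measurableSet_Icc.compl
  -- monotonicity of deriv φ
  have hmono : Monotone (deriv φ) := fun x y hxy =>
    hconv.monotoneOn_deriv (fun z _ => hdiff z) (Set.mem_univ x) (Set.mem_univ y) hxy
  -- Legendre transform attains sup at critical points
  have hleg : ∀ y p, deriv φ p = y → u y = p * y - φ p := by
    intro y p hp
    have hmax : ∀ x, x * y - φ x ≤ p * y - φ p := by
      intro x
      have hgd : ∀ t, HasDerivAt (fun t => φ t - t * y) (deriv φ t - y) t := fun t => by
        exact (hdiff t).hasDerivAt.sub (hasDerivAt_mul_const y)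
      have hgc : ∀ s : Set ℝ, ContinuousOn (fun t => φ t - t * y) s := fun s =>
        (hdiff.continuous.sub (continuous_id.mul continuous_const)).continuousOn
      have key : φ p - p * y ≤ φ x - x * y := by
        rcases lt_trichotomy x p with h | h | h
        · obtain ⟨z, hz, hzs⟩ := exists_hasDerivAt_eq_slope (fun t => φ t - t * y)
            (fun t => deriv φ t - y) h (hgc _) (fun t _ => hgd t)
          have h1 : deriv φ z ≤ y := hp ▸ hmono hz.2.le
          have h2 : (0:ℝ) < p - x := by linarith
          rw [eq_div_iff (ne_of_gt h2)] at hzs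
          have hprod : (deriv φ z - y) * (p - x) ≤ 0 :=
            mul_nonpos_iff.mpr (Or.inr ⟨by linarith, h2.le⟩)
          linarith
        · exact h ▸ le_rfl
        · obtain ⟨z, hz, hzs⟩ := exists_hasDerivAt_eq_slope (fun t => φ t - t * y)
            (fun t => deriv φ t - y) h (hgc _) (fun t _ => hgd t)
          have h1 : y ≤ deriv φ z := hp ▸ hmono hz.1.le
          have h2 : (0:ℝ) < x - p := by linarith
          rw [eq_div_iff (ne_of_gt h2)] at hzs
          have hprod : 0 ≤ (deriv φ z - y) * (x - p) :=
            mul_nonneg (by linarith) h2.le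
          linarith
      linarith
    rw [hu y]
    refine le_antisymm (ciSup_le hmax)
      (le_ciSup (f := fun x : ℝ => x * y - φ x) ⟨p * y - φ p, ?_⟩ p)
    rintro _ ⟨x, rfl⟩; exact hmax x
  -- key pointwise limit of symmetric second difference quotients
  have key : ∀ y₀ ∈ Set.Ioo (0:ℝ) 1 \ {c},
      Tendsto (fun h : ℝ => (u (y₀ + h) + u (y₀ - h) - 2 * u y₀) / h ^ 2) (𝓝[≠] 0)
        (𝓝 ((deriv (deriv φ) (Function.invFunOn (deriv φ) (Set.Icc a b)ᶜ y₀))⁻¹)) := by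
    intro y₀ hy₀
    have hy₀im : y₀ ∈ deriv φ '' (Set.Icc a b)ᶜ := himage ▸ hy₀
    obtain ⟨x', hx'T, hfx'⟩ := hy₀im
    set x₀ := Function.invFunOn (deriv φ) (Set.Icc a b)ᶜ y₀ with hx₀def
    have hex : ∃ x ∈ (Set.Icc a b)ᶜ, deriv φ x = y₀ := ⟨x', hx'T, hfx'⟩
    have hx₀T : x₀ ∈ (Set.Icc a b)ᶜ := Function.invFunOn_mem hex
    have hfx₀ : deriv φ x₀ = y₀ := Function.invFunOn_eq hex
    set k := deriv (deriv φ) x₀ with hkdef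
    have hk : 0 < k := hpos x₀ hx₀T
    have hCD : ContDiffAt ℝ (⊤ : ℕ∞) (deriv φ) x₀ := hsm.contDiffAt (hTopen.mem_nhds hx₀T)
    have hd2 : HasDerivAt (deriv φ) k x₀ := (hCD.differentiableAt (by simp)).hasDerivAt
    set e : ℝ ≃L[ℝ] ℝ := ContinuousLinearEquiv.unitsEquivAut ℝ (Units.mk0 k hk.ne') with he
    have hfe : HasFDerivAt (deriv φ) (e : ℝ →L[ℝ] ℝ) x₀ := by
      refine hd2.hasFDerivAt.congr_fderiv ?_
      ext x
      simp [he, ContinuousLinearEquiv.unitsEquivAut, mul_comm]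
    set ψ := hCD.localInverse hfe (by simp) with hψdef
    have h1 : ContDiffAt ℝ (⊤ : ℕ∞) ψ y₀ := hfx₀ ▸ hCD.to_localInverse hfe (by simp)
    have h2 : ψ y₀ = x₀ := by
      have := hCD.localInverse_apply_image hfe (by simp)
      rwa [hfx₀] at this
    have h3 : ∀ᶠ y in 𝓝 y₀, deriv φ (ψ y) = y := by
      have := (hCD.hasStrictFDerivAt' hfe (by simp)).eventually_right_inverse
      rwa [hfx₀] at this
    -- ψ is differentiable in a neighborhood
    obtain ⟨V, hV, hVd⟩ : ∃ V ∈ 𝓝 y₀, ∀ y ∈ V, DifferentiableAt ℝ ψ y := by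
      obtain ⟨V, hV, hVc⟩ := h1.contDiffOn (m := 1) (by simp) (by simp)
      refine ⟨interior V, interior_mem_nhds.mpr hV, fun y hy => ?_⟩
      exact (hVc.differentiableOn one_ne_zero).differentiableAt
        (mem_interior_iff_mem_nhds.mp (by simpa using hy))
    -- derivative of ψ at y₀ is k⁻¹
    have hψdiff : DifferentiableAt ℝ ψ y₀ := h1.differentiableAt (by simp)
    have hψd : HasDerivAt ψ (deriv ψ y₀) y₀ := hψdiff.hasDerivAt
    have hψ' : HasDerivAt ψ k⁻¹ y₀ := by
      have hcomp : HasDerivAt (deriv φ ∘ ψ) (k * deriv ψ y₀) y₀ :=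
        HasDerivAt.comp y₀ (h2.symm ▸ hd2) hψd
      have hid : HasDerivAt (deriv φ ∘ ψ) 1 y₀ := by
        refine (hasDerivAt_id y₀).congr_of_eventuallyEq ?_
        filter_upwards [h3] with y hy using hy
      have hkm : k * deriv ψ y₀ = 1 := hcomp.unique hid
      have : deriv ψ y₀ = k⁻¹ := eq_inv_of_mul_eq_one_right (by linarith [mul_comm k (deriv ψ y₀)])
      exact this ▸ hψd
    -- u has derivative ψ y at every y near y₀
    have hud : ∀ᶠ y in 𝓝 y₀, HasDerivAt u (ψ y) y := by
      have hVev : ∀ᶠ y in 𝓝 y₀, DifferentiableAt ℝ ψ y := eventually_of_mem hV hVd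
      have hboth : ∀ᶠ y in 𝓝 y₀, deriv φ (ψ y) = y ∧ DifferentiableAt ℝ ψ y := h3.and hVev
      filter_upwards [hboth, hboth.eventually_nhds] with y hy hyn
      have hUeq : u =ᶠ[𝓝 y] fun z => ψ z * z - φ (ψ z) := by
        filter_upwards [hyn] with z hz using hleg z (ψ z) hz.1
      have hU : HasDerivAt (fun z => ψ z * z - φ (ψ z)) (ψ y) y := by
        have hd := hy.2.hasDerivAt
        have := (hd.mul (hasDerivAt_id y)).sub
          (((hdiff (ψ y)).hasDerivAt.comp y hd))
        refine this.congr_deriv ?_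
        rw [hy.1]; simp only [id_eq]; ring
      exact hU.congr_of_eventuallyEq hUeq
    -- limit of symmetric first difference quotient of ψ's antiderivative derivative
    have t1 : Tendsto (fun h : ℝ => y₀ + h) (𝓝 0) (𝓝 y₀) := by
      simpa using (continuous_add_left y₀).tendsto (0:ℝ)
    have t2 : Tendsto (fun h : ℝ => y₀ - h) (𝓝 0) (𝓝 y₀) := by
      simpa using (continuous_sub_left y₀).tendsto (0:ℝ)
    have hNev : ∀ᶠ h in 𝓝 (0:ℝ), HasDerivAt
        (fun t => u (y₀ + t) + u (y₀ - t) - 2 * u y₀) (ψ (y₀ + h) - ψ (y₀ - h)) h := by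
      filter_upwards [t1.eventually hud, t2.eventually hud] with h h1' h2'
      have A : HasDerivAt (fun t => u (y₀ + t)) (ψ (y₀ + h) * 1) h :=
        HasDerivAt.comp h h1' ((hasDerivAt_id h).const_add y₀)
      have B : HasDerivAt (fun t => u (y₀ - t)) (ψ (y₀ - h) * (-1)) h :=
        HasDerivAt.comp h h2' ((hasDerivAt_id h).const_sub y₀)
      have := (A.add B).sub_const (2 * u y₀)
      refine this.congr_deriv ?_
      ring
    have hcu : ContinuousAt u y₀ := hud.self_of_nhds.differentiableAt.continuousAt
    have hNzero : Tendsto (fun t => u (y₀ + t) + u (y₀ - t) - 2 * u y₀) (𝓝[≠] (0:ℝ)) (𝓝 0) := by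
      have : Tendsto (fun t => u (y₀ + t) + u (y₀ - t) - 2 * u y₀) (𝓝 (0:ℝ))
          (𝓝 (u y₀ + u y₀ - 2 * u y₀)) :=
        ((hcu.tendsto.comp t1).add (hcu.tendsto.comp t2)).sub_const _
      have h0 : u y₀ + u y₀ - 2 * u y₀ = 0 := by ring
      rw [h0] at this
      exact this.mono_left nhdsWithin_le_nhds
    -- the ratio of derivatives tends to k⁻¹
    have hslope : Tendsto (slope ψ y₀) (𝓝[≠] y₀) (𝓝 k⁻¹) := hasDerivAt_iff_tendsto_slope.mp hψ'
    have tp : Tendsto (fun h : ℝ => y₀ + h) (𝓝[≠] 0) (𝓝[≠] y₀) := by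
      rw [tendsto_nhdsWithin_iff]
      refine ⟨t1.mono_left nhdsWithin_le_nhds, ?_⟩
      filter_upwards [self_mem_nhdsWithin] with h hh
      simpa using hh
    have tm : Tendsto (fun h : ℝ => y₀ - h) (𝓝[≠] 0) (𝓝[≠] y₀) := by
      rw [tendsto_nhdsWithin_iff]
      refine ⟨t2.mono_left nhdsWithin_le_nhds, ?_⟩
      filter_upwards [self_mem_nhdsWithin] with h hh
      simpa [sub_eq_iff_eq_add] using hh
    have hdiv : Tendsto (fun h : ℝ => (ψ (y₀ + h) - ψ (y₀ - h)) / (2 * h)) (𝓝[≠] 0)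
        (𝓝 k⁻¹) := by
      have hsum : Tendsto (fun h : ℝ => (slope ψ y₀ (y₀ + h) + slope ψ y₀ (y₀ - h)) / 2)
          (𝓝[≠] 0) (𝓝 ((k⁻¹ + k⁻¹) / 2)) := ((hslope.comp tp).add (hslope.comp tm)).div_const 2
      have hval : (k⁻¹ + k⁻¹) / 2 = k⁻¹ := by ring
      rw [hval] at hsum
      refine hsum.congr' ?_
      filter_upwards [self_mem_nhdsWithin] with h hh
      have hh' : h ≠ 0 := hh
      simp only [slope_def_field]
      rw [show y₀ + h - y₀ = h from by ring, show y₀ - h - y₀ = -h from by ring,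
        div_neg, ← sub_eq_add_neg, div_sub_div_same,
        show ψ (y₀ + h) - ψ y₀ - (ψ (y₀ - h) - ψ y₀) = ψ (y₀ + h) - ψ (y₀ - h) from by ring,
        div_div, mul_comm h 2]
    -- L'Hôpital
    have hmain := HasDerivAt.lhopital_zero_nhdsNE
      (f' := fun h : ℝ => ψ (y₀ + h) - ψ (y₀ - h)) (g' := fun h : ℝ => 2 * h)
      (hNev.filter_mono nhdsWithin_le_nhds)
      (Filter.Eventually.of_forall fun h => by simpa [mul_comm] using hasDerivAt_pow 2 h)
      (by filter_upwards [self_mem_nhdsWithin] with h hh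
          exact mul_ne_zero two_ne_zero hh)
      hNzero
      (by simpa using ((continuous_pow 2).tendsto (0:ℝ)).mono_left nhdsWithin_le_nhds)
      hdiv
    exact hmain
  -- a.e. identification of w
  have hae : ∀ᵐ y ∂(volume.restrict (Set.Ioo (0:ℝ) 1)),
      w y = (deriv (deriv φ) (Function.invFunOn (deriv φ) (Set.Icc a b)ᶜ y))⁻¹ := by
    have h1 : ∀ᵐ y ∂(volume.restrict (Set.Ioo (0:ℝ) 1)), y ∈ Set.Ioo (0:ℝ) 1 :=
      ae_restrict_mem measurableSet_Ioo
    have h2 : ∀ᵐ y ∂(volume.restrict (Set.Ioo (0:ℝ) 1)), y ≠ c := by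
      refine ae_restrict_of_ae ?_
      rw [ae_iff]
      simpa using measure_singleton (μ := volume) c
    filter_upwards [hw, h1, h2] with y hwy hy hyc
    exact tendsto_nhds_unique hwy (key y ⟨hy, hyc⟩)
  have hRHS : ∫ y in Set.Ioo (0:ℝ) 1, Real.log (w y)
      = ∫ y in Set.Ioo (0:ℝ) 1,
          Real.log ((deriv (deriv φ) (Function.invFunOn (deriv φ) (Set.Icc a b)ᶜ y))⁻¹) :=
    integral_congr_ae (hae.mono fun y hy => by simp only [hy])
  have hset : (Set.Ioo (0:ℝ) 1 \ {c} : Set ℝ) =ᵐ[volume] Set.Ioo (0:ℝ) 1 :=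
    diff_ae_eq_self.mpr (measure_mono_null Set.inter_subset_right (measure_singleton c))
  have hRHS2 : ∫ y in Set.Ioo (0:ℝ) 1,
        Real.log ((deriv (deriv φ) (Function.invFunOn (deriv φ) (Set.Icc a b)ᶜ y))⁻¹)
      = ∫ y in Set.Ioo (0:ℝ) 1 \ {c},
          Real.log ((deriv (deriv φ) (Function.invFunOn (deriv φ) (Set.Icc a b)ᶜ y))⁻¹) :=
    (setIntegral_congr_set hset).symm
  have hcv : ∫ y in Set.Ioo (0:ℝ) 1 \ {c},
        Real.log ((deriv (deriv φ) (Function.invFunOn (deriv φ) (Set.Icc a b)ᶜ y))⁻¹)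
      = ∫ x in (Set.Icc a b)ᶜ, |deriv (deriv φ) x| •
          Real.log ((deriv (deriv φ)
            (Function.invFunOn (deriv φ) (Set.Icc a b)ᶜ (deriv φ x)))⁻¹) := by
    rw [← himage]
    exact integral_image_eq_integral_abs_deriv_smul hKm
      (fun x hx => ((hsm.contDiffAt (hTopen.mem_nhds hx)).differentiableAt
        (by simp)).hasDerivAt.hasDerivWithinAt) hinj _
  have hcv2 : ∫ x in (Set.Icc a b)ᶜ, |deriv (deriv φ) x| •
        Real.log ((deriv (deriv φ)
          (Function.invFunOn (deriv φ) (Set.Icc a b)ᶜ (deriv φ x)))⁻¹)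
      = -∫ x in (Set.Icc a b)ᶜ, deriv (deriv φ) x * Real.log (deriv (deriv φ) x) := by
    rw [← integral_neg]
    refine setIntegral_congr_fun hKm fun x hx => ?_
    have hxx : Function.invFunOn (deriv φ) (Set.Icc a b)ᶜ (deriv φ x) = x :=
      hinj.leftInvOn_invFunOn hx
    rw [hxx, Real.log_inv, smul_eq_mul, abs_of_pos (hpos x hx)]
    ring
  have hLHS : ∫ x, deriv (deriv φ) x * Real.log (deriv (deriv φ) x)
      = ∫ x in (Set.Icc a b)ᶜ, deriv (deriv φ) x * Real.log (deriv (deriv φ) x) := by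
    rw [← integral_indicator hKm]
    refine integral_congr_ae ?_
    have hz : ∀ x ∈ Set.Ioo a b, deriv (deriv φ) x = 0 := by
      intro x hx
      have hev : deriv φ =ᶠ[𝓝 x] fun _ => c := by
        filter_upwards [isOpen_Ioo.mem_nhds hx] with z hz
        exact hflat z (Set.Ioo_subset_Icc_self hz)
      rw [hev.deriv_eq, deriv_const]
    have hab' : ∀ᵐ x : ℝ, x ∉ ({a, b} : Set ℝ) := by
      exact measure_eq_zero_iff_ae_notMem.mp ((Set.toFinite ({a, b} : Set ℝ)).measure_zero volume)
    filter_upwards [hab'] with x hxab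
    by_cases hx : x ∈ Set.Icc a b
    · have hxa : x ≠ a := fun h => hxab (by simp [h])
      have hxb : x ≠ b := fun h => hxab (by simp [h])
      have hio : x ∈ Set.Ioo a b :=
        ⟨lt_of_le_of_ne hx.1 (Ne.symm hxa), lt_of_le_of_ne hx.2 hxb⟩
      rw [Set.indicator_of_notMem (by simpa using hx), hz x hio, zero_mul]
    · rw [Set.indicator_of_mem (by simpa using hx)]
  rw [hLHS, hRHS, hRHS2, hcv, hcv2, neg_neg]
end
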